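/- arXiv:1805.03730 — 13 statements merged into one kernel-verified Lean document; each statement's English description precedes it below -/
import Mathlib

section
/- Let Z be a finite alphabet with q := |Z| ≥ 2, let Ω be a finite nonempty set, let p be a probability mass function on Ω, and let C : Ω → List Z be an injective (non-singular) code all of whose codewords are nonempty strings. Then the expected codeword length satisfies ∑_{w ∈ Ω} p(w)·length(C(w)) ≥ H_q(p) − 2·log_q(H_q(p) + q), where H_q(p) := ∑_{w ∈ Ω} p(w)·log_q(1/p(w)) is the base-q Shannon entropy (with the convention 0·log(1/0) = 0). -/
/-!
For a non-singular code with codeword lengths `ℓ w ≥ 1` over `q` letters, the weights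
`r w = q ^ (-ℓ w) / (ℓ w (ℓ w + 1))` sum to at most `1`: there are at most `q ^ n` codewords of
length `n`, and `∑ 1 / (n (n + 1))` telescopes. Gibbs' inequality against `r` gives
`H ≤ E[ℓ + logb q (ℓ (ℓ + 1))] ≤ L + 2 E[logb q (ℓ + 1)]`, and Jensen bounds the last expectation
by `logb q (L + 1)`. The bound `H ≤ L + 2 logb q (L + 1)` then rearranges to the claim: either
`H ≤ L` outright, or `L < H` and `L + 1 ≤ H + q`.
-/

open Finset Real

noncomputable def entropy {Ω : Type*} [Fintype Ω] (b : ℝ) (p : Ω → ℝ) : ℝ :=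
  ∑ w, p w * logb b (1 / p w)

noncomputable def expectedLength {Ω Z : Type*} [Fintype Ω] (p : Ω → ℝ) (C : Ω → List Z) : ℝ :=
  ∑ w, p w * ((C w).length : ℝ)

lemma expectedLength_nonneg {Ω Z : Type*} [Fintype Ω] {p : Ω → ℝ} (hp0 : ∀ w, 0 ≤ p w)
    (C : Ω → List Z) : 0 ≤ expectedLength p C :=
  sum_nonneg fun w _ => mul_nonneg (hp0 w) (Nat.cast_nonneg _)

lemma sum_Icc_inv_mul_succ (N : ℕ) :
    ∑ n ∈ Icc 1 N, ((n : ℝ) * (n + 1))⁻¹ = 1 - ((N : ℝ) + 1)⁻¹ := by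
  induction N with
  | zero => simp
  | succ N ih =>
    rw [sum_Icc_succ_top (by omega), ih]
    push_cast
    field_simp
    ring

lemma card_filter_length_eq_le {Ω Z : Type*} [Fintype Ω] [Fintype Z] {C : Ω → List Z}
    (hC : Function.Injective C) (n : ℕ) :
    #{w | (C w).length = n} ≤ Fintype.card Z ^ n := by
  rw [← Fintype.card_subtype, ← card_vector]
  exact Fintype.card_le_of_injective (fun w => ⟨C w, w.2⟩)
    fun v w h => Subtype.ext (hC (congrArg Subtype.val h))

lemma sum_inv_pow_length_mul_le_one {Ω Z : Type*} [Fintype Ω] [Fintype Z] [Nonempty Z]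
    {C : Ω → List Z} (hC : Function.Injective C) (hne : ∀ w, C w ≠ []) :
    ∑ w, (((Fintype.card Z : ℝ) ^ (C w).length) *
      ((C w).length * ((C w).length + 1)))⁻¹ ≤ 1 := by
  set q : ℝ := (Fintype.card Z : ℝ)
  have hq : 0 < q := by positivity
  set N := univ.sup fun w => (C w).length
  have hmaps : ∀ w ∈ (univ : Finset Ω), (C w).length ∈ Icc 1 N := fun w _ =>
    mem_Icc.2 ⟨List.length_pos_iff.2 (hne w), le_sup (f := fun w => (C w).length) (mem_univ w)⟩
  calc ∑ w, (q ^ (C w).length * ((C w).length * ((C w).length + 1)))⁻¹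
      = ∑ n ∈ Icc 1 N, #{w | (C w).length = n} * (q ^ n * (n * (n + 1)))⁻¹ := by
        rw [← sum_fiberwise_of_maps_to' hmaps fun n : ℕ => (q ^ n * (n * (n + 1)))⁻¹]
        simp only [sum_const, nsmul_eq_mul]
    _ ≤ ∑ n ∈ Icc 1 N, q ^ n * (q ^ n * (n * (n + 1)))⁻¹ := by
        gcongr with n
        simp only [q]
        exact_mod_cast card_filter_length_eq_le hC n
    _ = ∑ n ∈ Icc 1 N, ((n : ℝ) * (n + 1))⁻¹ := by
        refine sum_congr rfl fun n _ => ?_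
        rw [mul_inv, ← mul_assoc, mul_inv_cancel₀ (pow_ne_zero n hq.ne'), one_mul]
    _ ≤ 1 := by
        rw [sum_Icc_inv_mul_succ]
        linarith [inv_nonneg.2 (by positivity : (0 : ℝ) ≤ N + 1)]

lemma mul_logb_div_le {b p r : ℝ} (hb : 1 < b) (hp : 0 ≤ p) (hr : 0 < r) :
    p * logb b (r / p) ≤ (r - p) / log b := by
  have hlog := log_pos hb
  rcases hp.eq_or_lt with rfl | hp
  · simpa using div_nonneg hr.le hlog.le
  rw [logb, mul_div_assoc', div_le_div_iff_of_pos_right hlog]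
  calc p * log (r / p) ≤ p * (r / p - 1) := by
        gcongr
        exact log_le_sub_one_of_pos (by positivity)
    _ = r - p := by field_simp

lemma entropy_le_sum_mul_logb_inv {Ω : Type*} [Fintype Ω] {b : ℝ} (hb : 1 < b)
    {p r : Ω → ℝ} (hp0 : ∀ w, 0 ≤ p w) (hp1 : ∑ w, p w = 1) (hr0 : ∀ w, 0 < r w)
    (hr1 : ∑ w, r w ≤ 1) :
    entropy b p ≤ ∑ w, p w * logb b (r w)⁻¹ := by
  have hterm : ∀ w, p w * logb b (1 / p w) - p w * logb b (r w)⁻¹ ≤ (r w - p w) / log b := by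
    intro w
    rcases (hp0 w).eq_or_lt with h | h
    · simp [← h, div_nonneg (hr0 w).le (log_pos hb).le]
    calc p w * logb b (1 / p w) - p w * logb b (r w)⁻¹ = p w * logb b (r w / p w) := by
          rw [one_div, logb_inv, logb_inv, logb_div (hr0 w).ne' h.ne']
          ring
      _ ≤ (r w - p w) / log b := mul_logb_div_le hb (hp0 w) (hr0 w)
  have hsum : ∑ w, (r w - p w) / log b ≤ 0 := by
    rw [← sum_div, sum_sub_distrib, hp1]
    exact div_nonpos_of_nonpos_of_nonneg (by linarith) (log_pos hb).le
  have := sum_le_sum fun w (_ : w ∈ univ) => hterm w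
  rw [sum_sub_distrib] at this
  unfold entropy
  linarith

lemma entropy_nonneg {Ω : Type*} [Fintype Ω] {b : ℝ} (hb : 1 < b) {p : Ω → ℝ}
    (hp0 : ∀ w, 0 ≤ p w) (hp1 : ∑ w, p w = 1) : 0 ≤ entropy b p := by
  refine sum_nonneg fun w _ => ?_
  rcases (hp0 w).eq_or_lt with h | h
  · simp [← h]
  have hp1 : p w ≤ 1 := hp1 ▸ single_le_sum (fun w _ => hp0 w) (mem_univ w)
  exact mul_nonneg h.le (logb_nonneg hb (one_le_one_div h hp1))

lemma concaveOn_logb_Ioi {b : ℝ} (hb : 1 ≤ b) : ConcaveOn ℝ (Set.Ioi 0) (logb b) := by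
  have h : logb b = fun x => (log b)⁻¹ • log x := by
    ext x
    rw [smul_eq_mul, logb, div_eq_inv_mul]
  rw [h]
  exact strictConcaveOn_log_Ioi.concaveOn.smul (inv_nonneg.2 (log_nonneg hb))

lemma logb_pow_mul_mul_succ_le {b : ℝ} (hb : 1 < b) {n : ℕ} (hn : 0 < n) :
    logb b (b ^ n * (n * (n + 1))) ≤ n + 2 * logb b (n + 1) := by
  have hn' : (0 : ℝ) < n := by exact_mod_cast hn
  have h2 : 2 * logb b (n + 1) = logb b ((n + 1) ^ 2) := by
    rw [logb_pow]
    norm_num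
  rw [logb_mul (by positivity) (by positivity), logb_pow, logb_self_eq_one hb, mul_one, h2]
  gcongr
  nlinarith

lemma sum_mul_logb_le_logb_sum_mul {Ω : Type*} [Fintype Ω] {b : ℝ} (hb : 1 ≤ b)
    {p x : Ω → ℝ} (hp0 : ∀ w, 0 ≤ p w) (hp1 : ∑ w, p w = 1) (hx : ∀ w, 0 < x w) :
    ∑ w, p w * logb b (x w) ≤ logb b (∑ w, p w * x w) := by
  simpa using (concaveOn_logb_Ioi hb).le_map_sum (fun w _ => hp0 w) hp1 fun w _ => hx w

lemma entropy_le_expectedLength_add_two_mul_logb {Ω Z : Type*} [Fintype Ω] [Fintype Z]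
    (hq : 1 < Fintype.card Z) {p : Ω → ℝ} (hp0 : ∀ w, 0 ≤ p w) (hp1 : ∑ w, p w = 1)
    {C : Ω → List Z} (hC : Function.Injective C) (hne : ∀ w, C w ≠ []) :
    entropy (Fintype.card Z) p ≤
      expectedLength p C + 2 * logb (Fintype.card Z) (expectedLength p C + 1) := by
  have : Nonempty Z := Fintype.card_pos_iff.1 (by omega)
  have hq : (1 : ℝ) < Fintype.card Z := by exact_mod_cast hq
  set q : ℝ := (Fintype.card Z : ℝ)
  have hlen : ∀ w, 0 < (C w).length := fun w => List.length_pos_iff.2 (hne w)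
  calc entropy q p
      ≤ ∑ w, p w * logb q (q ^ (C w).length * ((C w).length * ((C w).length + 1)))⁻¹⁻¹ := by
        refine entropy_le_sum_mul_logb_inv hq hp0 hp1 (fun w => ?_)
          (sum_inv_pow_length_mul_le_one hC hne)
        have := hlen w
        positivity
    _ ≤ ∑ w, p w * ((C w).length + 2 * logb q ((C w).length + 1)) := by
        gcongr with w
        · exact hp0 w
        rw [inv_inv]
        exact logb_pow_mul_mul_succ_le hq (hlen w)
    _ = expectedLength p C + 2 * ∑ w, p w * logb q ((C w).length + 1) := by
        simp only [expectedLength, mul_add, sum_add_distrib, mul_sum]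
        ring_nf
    _ ≤ expectedLength p C + 2 * logb q (∑ w, p w * ((C w).length + 1)) := by
        gcongr
        exact sum_mul_logb_le_logb_sum_mul hq.le hp0 hp1 fun w => by positivity
    _ = expectedLength p C + 2 * logb q (expectedLength p C + 1) := by
        simp only [expectedLength, mul_add_one, sum_add_distrib, hp1]

lemma sub_two_mul_logb_add_le {b H L : ℝ} (hb : 1 < b) (hH : 0 ≤ H) (hL : 0 ≤ L)
    (h : H ≤ L + 2 * logb b (L + 1)) : H - 2 * logb b (H + b) ≤ L := by
  rcases le_or_gt L H with hLH | hHL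
  · have : logb b (L + 1) ≤ logb b (H + b) := logb_le_logb_of_le hb (by linarith) (by linarith)
    linarith
  · have : 0 ≤ logb b (H + b) := logb_nonneg hb (by linarith)
    linarith

theorem stmt_0_general {Z Ω : Type*} [Fintype Z] [Fintype Ω]
    (hq : 2 ≤ Fintype.card Z)
    (p : Ω → ℝ) (hp0 : ∀ w, 0 ≤ p w) (hp1 : ∑ w, p w = 1)
    (C : Ω → List Z) (hC : Function.Injective C) (hne : ∀ w, C w ≠ []) :
    ∑ w, p w * ((C w).length : ℝ) ≥
      (∑ w, p w * Real.logb (Fintype.card Z) (1 / p w)) -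
        2 * Real.logb (Fintype.card Z)
          ((∑ w, p w * Real.logb (Fintype.card Z) (1 / p w)) + (Fintype.card Z : ℝ)) := by
  have hq' : (1 : ℝ) < Fintype.card Z := by exact_mod_cast hq
  exact sub_two_mul_logb_add_le hq' (entropy_nonneg hq' hp0 hp1)
    (expectedLength_nonneg hp0 C)
    (entropy_le_expectedLength_add_two_mul_logb hq hp0 hp1 hC hne)

/-- Lower bound on expected length of the best non-singular code
(adapted from Leung-Yan-Cheong–Cover). -/
theorem stmt_0 {Z Ω : Type*} [Fintype Z] [Fintype Ω] [Nonempty Ω]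
    (hq : 2 ≤ Fintype.card Z)
    (p : Ω → ℝ) (hp0 : ∀ w, 0 ≤ p w) (hp1 : ∑ w, p w = 1)
    (C : Ω → List Z) (hC : Function.Injective C) (hne : ∀ w, C w ≠ []) :
    ∑ w, p w * ((C w).length : ℝ) ≥
      (∑ w, p w * Real.logb (Fintype.card Z) (1 / p w)) -
        2 * Real.logb (Fintype.card Z)
          ((∑ w, p w * Real.logb (Fintype.card Z) (1 / p w)) + (Fintype.card Z : ℝ)) :=
  stmt_0_general hq p hp0 hp1 C hC hne
end

section
/- For x3, x3' ∈ A^k, say x3 ≈ x3' iff f^k(x1, x2, x3) = f^k(x1, x2, x3') for all x1, x2 ∈ A^k, and let g : A^k → (A^k / ≈) denote the quotient map sending x3 to its ≈-equivalence class. For any zero-error code for f with block length k, with X3 uniformly distributed on A^k, Z31 := φ31(X3), and Z32 := φ32(X3), one has H(g(X3)) ≤ H(Z31) + H(Z32). -/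
/-! The zero-error condition makes the `≈`-class of `X3` a function of the pair `(Z31, Z32)`: two
inputs with the same encodings give the same decoder output for every `x1, x2`. Hence
`H(g(X3)) ≤ H(Z31, Z32) ≤ H(Z31) + H(Z32)`. For the uniform distribution both steps are counting
statements about fibers: data processing because fibers only grow under a function, subadditivity
from `log x ≤ x - 1` applied to `P(Z31) P(Z32) / P(Z31, Z32)`. -/

open Classical

/-- A zero-error (variable-length) code for computing `f` componentwise with block length `k`
on the diamond network: encoders `phi31, phi32` (from `s₃`), `phi1, phi2` (to the terminal)
and a decoder `psi` that recovers `f^k` with zero error. -/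
structure ZECode (A B Z : Type*) (k : ℕ) (f : A → A → A → B) where
  phi31 : (Fin k → A) → List Z
  phi32 : (Fin k → A) → List Z
  phi1 : (Fin k → A) → List Z → List Z
  phi2 : (Fin k → A) → List Z → List Z
  psi : List Z → List Z → (Fin k → B)
  zero_error : ∀ x1 x2 x3 : Fin k → A,
    psi (phi1 x1 (phi31 x3)) (phi2 x2 (phi32 x3)) = fun i => f (x1 i) (x2 i) (x3 i)

/-- Base-2 Shannon entropy of the random variable `W` when the underlying finite sample
space `Ω` carries the uniform distribution (convention `0·log(1/0) = 0`). -/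
noncomputable def uH {Ω S : Type*} [Fintype Ω] (W : Ω → S) : ℝ :=
  ∑ s ∈ Finset.univ.image W,
    (((Finset.univ.filter fun ω => W ω = s).card : ℝ) / (Fintype.card Ω : ℝ)) *
      Real.logb 2 ((Fintype.card Ω : ℝ) / ((Finset.univ.filter fun ω => W ω = s).card : ℝ))

/-- Base-2 conditional Shannon entropy `H(W | V)` for the uniform distribution on `Ω`:
`H(W|V) = ∑_v P(V = v) · H(W | V = v)`, with the convention `0·log(1/0) = 0`. -/
noncomputable def uCondH {Ω S T : Type*} [Fintype Ω] (W : Ω → S) (V : Ω → T) : ℝ :=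
  ∑ v ∈ Finset.univ.image V, ∑ s ∈ Finset.univ.image W,
    (((Finset.univ.filter fun ω => W ω = s ∧ V ω = v).card : ℝ) / (Fintype.card Ω : ℝ)) *
      Real.logb 2 (((Finset.univ.filter fun ω => V ω = v).card : ℝ) /
        ((Finset.univ.filter fun ω => W ω = s ∧ V ω = v).card : ℝ))

/-- `x1 ≡^{a3} y1 |₁` : `f(x1, x2, a3) = f(y1, x2, a3)` for all `x2`. -/
def eqv1 {A B : Type*} (f : A → A → A → B) (a3 : A) (x y : A) : Prop :=
  ∀ x2, f x x2 a3 = f y x2 a3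

/-- `x2 ≡^{a3} y2 |₂` : `f(x1, x2, a3) = f(x1, y2, a3)` for all `x1`. -/
def eqv2 {A B : Type*} (f : A → A → A → B) (a3 : A) (x y : A) : Prop :=
  ∀ x1, f x1 x a3 = f x1 y a3

/-- Componentwise extension of `≡^{a3}|₁` to blocks of length `k`. -/
def eqv1k {A B : Type*} (f : A → A → A → B) {k : ℕ} (a3 : Fin k → A) (x y : Fin k → A) : Prop :=
  ∀ i, eqv1 f (a3 i) (x i) (y i)

/-- Componentwise extension of `≡^{a3}|₂` to blocks of length `k`. -/
def eqv2k {A B : Type*} (f : A → A → A → B) {k : ℕ} (a3 : Fin k → A) (x y : Fin k → A) : Prop :=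
  ∀ i, eqv2 f (a3 i) (x i) (y i)

/-- `≡^{a3}|₁` as a setoid on `A`. -/
def eqv1Setoid {A B : Type*} (f : A → A → A → B) (a3 : A) : Setoid A where
  r := eqv1 f a3
  iseqv := ⟨fun _ _ => rfl, fun h x2 => (h x2).symm, fun h h' x2 => (h x2).trans (h' x2)⟩

/-- `≡^{a3}|₂` as a setoid on `A`. -/
def eqv2Setoid {A B : Type*} (f : A → A → A → B) (a3 : A) : Setoid A where
  r := eqv2 f a3
  iseqv := ⟨fun _ _ => rfl, fun h x1 => (h x1).symm, fun h h' x1 => (h x1).trans (h' x1)⟩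

/-- `≡^{a3}|₁` as a setoid on `A^k`. -/
def eqv1kSetoid {A B : Type*} (f : A → A → A → B) {k : ℕ} (a3 : Fin k → A) :
    Setoid (Fin k → A) where
  r := eqv1k f a3
  iseqv := ⟨fun _ _ _ => rfl, fun h i x2 => (h i x2).symm,
    fun h h' i x2 => (h i x2).trans (h' i x2)⟩

/-- `≡^{a3}|₂` as a setoid on `A^k`. -/
def eqv2kSetoid {A B : Type*} (f : A → A → A → B) {k : ℕ} (a3 : Fin k → A) :
    Setoid (Fin k → A) where
  r := eqv2k f a3
  iseqv := ⟨fun _ _ _ => rfl, fun h i x1 => (h i x1).symm,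
    fun h h' i x1 => (h i x1).trans (h' i x1)⟩

/-- The equivalence `x3 ≈ x3'` on `A^k`: same demand-function values for all `x1, x2`. -/
def approxSetoid {A B : Type*} (f : A → A → A → B) (k : ℕ) : Setoid (Fin k → A) where
  r x3 x3' := ∀ x1 x2 : Fin k → A, ∀ i, f (x1 i) (x2 i) (x3 i) = f (x1 i) (x2 i) (x3' i)
  iseqv := ⟨fun _ _ _ _ => rfl, fun h x1 x2 i => (h x1 x2 i).symm,
    fun h h' x1 x2 i => (h x1 x2 i).trans (h' x1 x2 i)⟩


open Finset

section UniformEntropy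

variable {Ω S T : Type*} [Fintype Ω]

noncomputable def fiberCard (W : Ω → S) (ω : Ω) : ℕ := #{ω' | W ω' = W ω}

lemma fiberCard_pos (W : Ω → S) (ω : Ω) : 0 < fiberCard W ω :=
  card_pos.mpr ⟨ω, mem_filter.mpr ⟨mem_univ ω, rfl⟩⟩

lemma fiberCard_eq_of_eq {W : Ω → S} {ω : Ω} {s : S} (hω : W ω = s) :
    fiberCard W ω = #{ω' | W ω' = s} := by
  rw [fiberCard, hω]

lemma uH_eq_sum_log_div_fiberCard (W : Ω → S) :
    uH W = (∑ ω, Real.log (Fintype.card Ω / fiberCard W ω)) /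
      (Fintype.card Ω * Real.log 2) := by
  rw [uH, ← sum_fiberwise_of_maps_to (g := W) (t := univ.image W)
    (fun ω _ => mem_image_of_mem W (mem_univ ω)), sum_div]
  refine sum_congr rfl fun s _ => ?_
  rw [sum_congr rfl fun ω hω => by rw [fiberCard_eq_of_eq (mem_filter.mp hω).2], sum_const,
    nsmul_eq_mul, Real.logb]
  field_simp

theorem uH_le_of_factorsThrough {V : Ω → S} {W : Ω → T} (hWV : W.FactorsThrough V) :
    uH W ≤ uH V := by
  rw [uH_eq_sum_log_div_fiberCard, uH_eq_sum_log_div_fiberCard]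
  gcongr with ω
  · exact div_pos (by exact_mod_cast Fintype.card_pos_iff.mpr ⟨ω⟩)
      (by exact_mod_cast fiberCard_pos W ω)
  · exact_mod_cast fiberCard_pos V ω
  · exact card_le_card (monotone_filter_right _ fun _ _ h => hWV h)

lemma sum_inv_fiberCard_filter_le_one (U : Ω → S) (s : S) :
    ∑ ω with U ω = s, (1 / fiberCard U ω : ℝ) ≤ 1 := by
  rw [sum_congr rfl fun ω hω => by rw [fiberCard_eq_of_eq (mem_filter.mp hω).2], sum_const,
    nsmul_eq_mul]
  rcases (#{ω | U ω = s}).eq_zero_or_pos with h | h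
  · simp [h]
  · rw [mul_one_div_cancel (by exact_mod_cast h.ne')]

/- Double counting: `fiberCard V ω * fiberCard W ω` is the number of pairs `(ω₁, ω₂)` with
`(V ω₁, W ω₂) = (V ω, W ω)`, and every joint fiber has total weight `∑ 1 / fiberCard ≤ 1`. -/
lemma sum_fiberCard_mul_div_le (V : Ω → S) (W : Ω → T) :
    ∑ ω, (fiberCard V ω * fiberCard W ω / fiberCard (fun ω => (V ω, W ω)) ω : ℝ) ≤
      (Fintype.card Ω : ℝ) ^ 2 := by
  calc ∑ ω, (fiberCard V ω * fiberCard W ω / fiberCard (fun ω => (V ω, W ω)) ω : ℝ)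
      = ∑ p : Ω × Ω, ∑ ω with (V ω, W ω) = (V p.1, W p.2),
          (1 / fiberCard (fun ω => (V ω, W ω)) ω : ℝ) := by
        simp only [sum_filter]
        rw [sum_comm]
        refine sum_congr rfl fun ω _ => ?_
        rw [← sum_filter, sum_const, nsmul_eq_mul, fiberCard, fiberCard, ← Nat.cast_mul,
          ← card_product, ← filter_product, univ_product_univ,
          mul_one_div]
        congr 3
        ext p
        simp only [mem_filter, mem_univ, true_and, Prod.mk.injEq, eq_comm]
    _ ≤ ∑ _p : Ω × Ω, (1 : ℝ) :=
        sum_le_sum fun p _ => le_of_eq_of_le (sum_congr (by ext; simp) fun _ _ => rfl)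
          (sum_inv_fiberCard_filter_le_one (fun ω => (V ω, W ω)) (V p.1, W p.2))
    _ = (Fintype.card Ω : ℝ) ^ 2 := by simp [sq]

lemma Real.log_div_le_log_div_add_log_div_add {n a b c : ℝ} (hn : 0 < n) (ha : 0 < a)
    (hb : 0 < b) (hc : 0 < c) :
    Real.log (n / c) ≤ Real.log (n / a) + Real.log (n / b) + (a * b / (n * c) - 1) := by
  have h := Real.log_le_sub_one_of_pos (show 0 < a * b / (n * c) by positivity)
  rw [Real.log_div (by positivity) (by positivity), Real.log_mul ha.ne' hb.ne',
    Real.log_mul hn.ne' hc.ne'] at h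
  rw [Real.log_div hn.ne' hc.ne', Real.log_div hn.ne' ha.ne', Real.log_div hn.ne' hb.ne']
  linarith

theorem uH_pair_le_add (V : Ω → S) (W : Ω → T) : uH (fun ω => (V ω, W ω)) ≤ uH V + uH W := by
  simp only [uH_eq_sum_log_div_fiberCard, ← add_div]
  gcongr
  set n : ℝ := (Fintype.card Ω : ℝ)
  have gibbs : ∀ ω, Real.log (n / fiberCard (fun ω => (V ω, W ω)) ω) ≤
      Real.log (n / fiberCard V ω) + Real.log (n / fiberCard W ω) +
        (fiberCard V ω * fiberCard W ω / (n * fiberCard (fun ω => (V ω, W ω)) ω) - 1) :=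
    fun ω => Real.log_div_le_log_div_add_log_div_add
      (by simpa [n] using Fintype.card_pos_iff.mpr ⟨ω⟩) (by exact_mod_cast fiberCard_pos V ω)
      (by exact_mod_cast fiberCard_pos W ω) (by exact_mod_cast fiberCard_pos _ ω)
  have slack : ∑ ω, (fiberCard V ω * fiberCard W ω /
      (n * fiberCard (fun ω => (V ω, W ω)) ω) - 1 : ℝ) ≤ 0 := by
    have h : (∑ ω, (fiberCard V ω * fiberCard W ω / fiberCard (fun ω => (V ω, W ω)) ω : ℝ)) / n
        ≤ n := by
      calc _ ≤ n ^ 2 / n := by gcongr; exact sum_fiberCard_mul_div_le V W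
        _ = n := by rw [sq, mul_self_div_self]
    rw [sum_div] at h
    simp only [mul_comm n, ← div_div] at h ⊢
    rw [sum_sub_distrib, sum_const, card_univ, nsmul_one]
    linarith
  calc _ ≤ _ := sum_le_sum fun ω _ => gibbs ω
    _ ≤ _ := by rw [sum_add_distrib, sum_add_distrib]; linarith

end UniformEntropy

lemma ZECode.quotient_mk_eq_of_phi_eq {A B Z : Type*} {k : ℕ} {f : A → A → A → B}
    (c : ZECode A B Z k f) {x y : Fin k → A} (h31 : c.phi31 x = c.phi31 y)
    (h32 : c.phi32 x = c.phi32 y) :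
    Quotient.mk (approxSetoid f k) x = Quotient.mk (approxSetoid f k) y :=
  Quotient.sound fun x1 x2 i => by
    have hy := c.zero_error x1 x2 y
    rw [← h31, ← h32, c.zero_error] at hy
    exact congrFun hy i

theorem stmt_4_general {A B Z : Type*} [Fintype A]
    {k : ℕ} (f : A → A → A → B) (c : ZECode A B Z k f) :
    uH (fun x3 : Fin k → A => Quotient.mk (approxSetoid f k) x3) ≤
      uH (fun x3 : Fin k → A => c.phi31 x3) + uH (fun x3 : Fin k → A => c.phi32 x3) := by
  have hclass : (fun x3 => Quotient.mk (approxSetoid f k) x3).FactorsThrough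
      fun x3 : Fin k → A => (c.phi31 x3, c.phi32 x3) := fun _ _ h =>
    c.quotient_mk_eq_of_phi_eq (Prod.mk.inj h).1 (Prod.mk.inj h).2
  exact (uH_le_of_factorsThrough hclass).trans (uH_pair_le_add _ _)

/-- With `X3` uniform on `A^k`, the entropy of the `≈`-class of `X3` is at most
`H(Z31) + H(Z32)` where `Z31 = φ31(X3)`, `Z32 = φ32(X3)`. -/
theorem stmt_4 {A B Z : Type*} [Fintype A] [Fintype B] [Fintype Z]
    (hA : 1 < Fintype.card A) (hZ : 1 < Fintype.card Z)
    {k : ℕ} (hk : 1 ≤ k) (f : A → A → A → B) (c : ZECode A B Z k f) :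
    uH (fun x3 : Fin k → A => Quotient.mk (approxSetoid f k) x3) ≤
      uH (fun x3 : Fin k → A => c.phi31 x3) + uH (fun x3 : Fin k → A => c.phi32 x3) :=
  stmt_4_general f c
end

section
/- For any zero-error code for f with block length k and any a3 ∈ A^k: if x1, y1 ∈ A^k satisfy ¬(x1 ≡^{a3} y1 |_1), then φ1(x1, φ31(a3)) ≠ φ1(y1, φ31(a3)); likewise, if x2, y2 ∈ A^k satisfy ¬(x2 ≡^{a3} y2 |_2), then φ2(x2, φ32(a3)) ≠ φ2(y2, φ32(a3)). -/
open Classical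

/-- Inequivalent blocks (given `a3`) must receive distinct labels on the
corresponding edge. -/
theorem stmt_5 {A B Z : Type*} [Fintype A] [Fintype B] [Fintype Z]
    (hA : 1 < Fintype.card A) (hZ : 1 < Fintype.card Z)
    {k : ℕ} (hk : 1 ≤ k) (f : A → A → A → B) (c : ZECode A B Z k f)
    (a3 : Fin k → A) :
    (∀ x1 y1 : Fin k → A, ¬ eqv1k f a3 x1 y1 →
        c.phi1 x1 (c.phi31 a3) ≠ c.phi1 y1 (c.phi31 a3)) ∧
    (∀ x2 y2 : Fin k → A, ¬ eqv2k f a3 x2 y2 →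
        c.phi2 x2 (c.phi32 a3) ≠ c.phi2 y2 (c.phi32 a3)) := by
  constructor
  · intro x1 y1 hne heq
    apply hne
    intro i x2
    have h1 := c.zero_error x1 (fun _ => x2) a3
    have h2 := c.zero_error y1 (fun _ => x2) a3
    rw [heq, h2] at h1
    exact (congrFun h1 i).symm
  · intro x2 y2 hne heq
    apply hne
    intro i x1
    have h1 := c.zero_error (fun _ => x1) x2 a3
    have h2 := c.zero_error (fun _ => x1) y2 a3
    rw [heq, h2] at h1
    exact (congrFun h1 i).symm
end

section
/- For any zero-error code for f with block length k and any a3 ∈ A^k, the image set {φ1(x1, φ31(a3)) : x1 ∈ A^k} has cardinality at least ∏_{i=1}^{k} V_1(a3^{(i)}), where V_1(a) denotes the number of equivalence classes of ≡^{a}|_1 on A. -/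
open Classical

/-- The number of distinct `Z1`-labels used when `X3 = a3` is at least
`∏ i, V₁(a3 i)`, the product of the numbers of `≡^{a3 i}|₁`-equivalence classes of `A`. -/
theorem stmt_6 {A B Z : Type*} [Fintype A] [Fintype B] [Fintype Z]
    (hA : 1 < Fintype.card A) (hZ : 1 < Fintype.card Z)
    {k : ℕ} (hk : 1 ≤ k) (f : A → A → A → B) (c : ZECode A B Z k f)
    (a3 : Fin k → A) :
    (∏ i, (Finset.univ.image (Quotient.mk (eqv1Setoid f (a3 i)))).card) ≤
      (Finset.univ.image fun x1 : Fin k → A => c.phi1 x1 (c.phi31 a3)).card := by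

  classical
  -- Key: equal labels imply componentwise equivalence
  have key : ∀ x y : Fin k → A,
      c.phi1 x (c.phi31 a3) = c.phi1 y (c.phi31 a3) → eqv1k f a3 x y := by
    intro x y hxy i x2
    have h1 := c.zero_error x (fun _ => x2) a3
    have h2 := c.zero_error y (fun _ => x2) a3
    rw [hxy] at h1
    exact congrFun (h1.symm.trans h2) i
  have hAne : Nonempty A := Fintype.card_pos_iff.mp (by omega)
  set Q := ∀ i, Quotient (eqv1Setoid f (a3 i)) with hQ
  have hg : Function.Surjective (fun x : Fin k → A => (fun i => ⟦x i⟧ : Q)) := by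
    intro q
    choose x hx using fun i => Quotient.exists_rep (q i)
    exact ⟨x, funext hx⟩
  -- LHS = Fintype.card Q
  have hL : (∏ i, (Finset.univ.image (Quotient.mk (eqv1Setoid f (a3 i)))).card)
      = Fintype.card Q := by
    rw [Fintype.card_pi]
    refine Finset.prod_congr rfl fun i _ => ?_
    rw [Finset.image_univ_of_surjective Quotient.mk_surjective, Finset.card_univ]
  rw [hL]
  -- Surjection from the label set onto Q
  set p : (Fin k → A) → List Z := fun x => c.phi1 x (c.phi31 a3) with hp
  set F : List Z → Q := fun l => fun i => ⟦(Function.invFun p l) i⟧ with hF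
  have hsurj : Set.SurjOn F (Finset.univ.image p) (Finset.univ : Finset Q) := by
    intro q _
    obtain ⟨x, hx⟩ := hg q
    refine ⟨p x, Finset.mem_coe.mpr (Finset.mem_image_of_mem p (Finset.mem_univ x)), ?_⟩
    have hinv : p (Function.invFun p (p x)) = p x :=
      Function.invFun_eq ⟨x, rfl⟩
    have hequiv := key _ _ hinv
    rw [← hx]
    funext i
    exact Quotient.sound (hequiv i)
  have := Finset.card_le_card_of_surjOn F hsurj
  simpa using this
end

section
/- For any zero-error code for f with block length k and any a3 ∈ A^k, the following majorization holds: for every finite set T of strings over Z, there exists a collection U of at most |T| distinct equivalence classes of ≡^{a3}|_1 on A^k such that |{x1 ∈ A^k : φ1(x1, φ31(a3)) ∈ T}| ≤ ∑_{C ∈ U} |C|. Equivalently, the conditional probability mass function of the label Z1 given X3 = a3 (with X1 uniform on A^k) is majorized by the vector of equivalence-class sizes of ≡^{a3}|_1 divided by |A|^k. -/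
open Classical

/-- Majorization of the conditional p.m.f. of the label `Z1` given `X3 = a3`
by the normalized sizes of the `≡^{a3}|₁` equivalence classes: the mass of any `|T|` labels
is at most the total mass of some `≤ |T|` equivalence classes. -/
theorem stmt_8 {A B Z : Type*} [Fintype A] [Fintype B] [Fintype Z]
    (hA : 1 < Fintype.card A) (hZ : 1 < Fintype.card Z)
    {k : ℕ} (hk : 1 ≤ k) (f : A → A → A → B) (c : ZECode A B Z k f)
    (a3 : Fin k → A) (T : Finset (List Z)) :
    ∃ U : Finset (Quotient (eqv1kSetoid f a3)),
      U.card ≤ T.card ∧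
      (Finset.univ.filter fun x1 : Fin k → A => c.phi1 x1 (c.phi31 a3) ∈ T).card ≤
        ∑ q ∈ U, (Finset.univ.filter fun x1 : Fin k → A =>
          Quotient.mk (eqv1kSetoid f a3) x1 = q).card := by

  classical
  have : Nonempty A := Fintype.card_pos_iff.mp (by omega)
  set l : (Fin k → A) → List Z := fun x => c.phi1 x (c.phi31 a3) with hl
  have key : ∀ x y : Fin k → A, l x = l y → eqv1k f a3 x y := by
    intro x y h i b
    have hx := c.zero_error x (fun _ => b) a3
    have hy := c.zero_error y (fun _ => b) a3
    have : c.psi (l x) (c.phi2 (fun _ => b) (c.phi32 a3)) i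
        = c.psi (l y) (c.phi2 (fun _ => b) (c.phi32 a3)) i := by rw [h]
    rw [hx, hy] at this
    exact this
  set s : Finset (Fin k → A) := Finset.univ.filter fun x1 => l x1 ∈ T with hs
  refine ⟨s.image (Quotient.mk (eqv1kSetoid f a3)), ?_, ?_⟩
  · -- card bound: classes in U are at most labels used
    have h1 : (s.image (Quotient.mk (eqv1kSetoid f a3))).card ≤ (s.image l).card := by
      apply Finset.card_le_card_of_surjOn
        (fun t => if h : ∃ a ∈ s, l a = t then Quotient.mk (eqv1kSetoid f a3) h.choose
          else Quotient.mk (eqv1kSetoid f a3) (fun _ => Classical.arbitrary A))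
      intro q hq
      simp only [Finset.coe_image, Set.mem_image, Finset.mem_coe] at hq ⊢
      obtain ⟨a, ha, rfl⟩ := hq
      refine ⟨l a, ⟨a, ha, rfl⟩, ?_⟩
      have hex : ∃ b ∈ s, l b = l a := ⟨a, ha, rfl⟩
      rw [dif_pos hex]
      exact Quotient.sound (key _ _ hex.choose_spec.2)
    have h2 : (s.image l).card ≤ T.card := by
      apply Finset.card_le_card
      intro t ht
      simp only [Finset.mem_image] at ht
      obtain ⟨a, ha, rfl⟩ := ht
      simpa [hs] using ha
    exact h1.trans h2
  · have := Finset.card_eq_sum_card_fiberwise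
      (f := Quotient.mk (eqv1kSetoid f a3)) (s := s)
      (t := s.image (Quotient.mk (eqv1kSetoid f a3)))
      (fun x hx => Finset.mem_image_of_mem _ hx)
    rw [this]
    apply Finset.sum_le_sum
    intro q _
    apply Finset.card_le_card
    intro x hx
    simp only [Finset.mem_filter] at hx ⊢
    exact ⟨Finset.mem_univ _, hx.2⟩
end

section
/- For any zero-error code for f with block length k and any a3 ∈ A^k, the entropy of the distribution of the label Z1 given X3 = a3 is bounded below by the entropy of the equivalence-class-size distribution: ∑_{z} (|{x1 ∈ A^k : φ1(x1, φ31(a3)) = z}| / |A|^k)·log₂(|A|^k / |{x1 : φ1(x1, φ31(a3)) = z}|) ≥ ∑_{C} (|C| / |A|^k)·log₂(|A|^k / |C|), where the left sum ranges over the strings z in the image of x1 ↦ φ1(x1, φ31(a3)) and the right sum ranges over the equivalence classes C of ≡^{a3}|_1 on A^k. -/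
open Classical

/-! Since the code has zero error, the label `φ1(x1, φ31(a3))` determines the
`≡^{a3}|₁`-class of `x1`: two inputs with the same label give the same value of `f^k`
against every `x2`. The class is therefore a function of the label, and the entropy of a
function of a uniformly distributed variable is at most the entropy of the variable itself,
because every fiber of the coarser map contains the corresponding fiber of the finer one. -/

section Entropy

variable {Ω S T : Type*} [Fintype Ω]

lemma uH_eq_sum_logb_fiber (W : Ω → S) :
    uH W = ∑ ω, Real.logb 2 ((Fintype.card Ω : ℝ) /
      ((Finset.univ.filter fun ω' => W ω' = W ω).card : ℝ)) / (Fintype.card Ω : ℝ) := by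
  rw [uH, ← Finset.sum_fiberwise_of_maps_to'
    (fun ω _ => Finset.mem_image_of_mem W (Finset.mem_univ ω)) fun s =>
      Real.logb 2 ((Fintype.card Ω : ℝ) /
        ((Finset.univ.filter fun ω' => W ω' = s).card : ℝ)) / (Fintype.card Ω : ℝ)]
  refine Finset.sum_congr rfl fun s _ => ?_
  rw [Finset.sum_const, nsmul_eq_mul]
  ring

lemma card_filter_eq_le_of_factorsThrough {V : Ω → T} {W : Ω → S}
    (hVW : Function.FactorsThrough V W) (ω : Ω) :
    (Finset.univ.filter fun ω' => W ω' = W ω).card ≤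
      (Finset.univ.filter fun ω' => V ω' = V ω).card :=
  Finset.card_le_card fun ω' hω' => by
    simp only [Finset.mem_filter, Finset.mem_univ, true_and] at hω' ⊢
    exact hVW hω'

lemma uH_le_uH_of_factorsThrough {V : Ω → T} {W : Ω → S}
    (hVW : Function.FactorsThrough V W) : uH V ≤ uH W := by
  rw [uH_eq_sum_logb_fiber V, uH_eq_sum_logb_fiber W]
  refine Finset.sum_le_sum fun ω _ => div_le_div_of_nonneg_right ?_ (Nat.cast_nonneg _)
  have hΩ : (0 : ℝ) < Fintype.card Ω := Nat.cast_pos.mpr (Fintype.card_pos_iff.mpr ⟨ω⟩)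
  have hW : (0 : ℝ) < (Finset.univ.filter fun ω' => W ω' = W ω).card :=
    Nat.cast_pos.mpr <| Finset.card_pos.mpr ⟨ω, by simp⟩
  have hWV := Nat.cast_le (α := ℝ).mpr (card_filter_eq_le_of_factorsThrough hVW ω)
  exact Real.logb_le_logb_of_le one_lt_two (div_pos hΩ (hW.trans_le hWV))
    (div_le_div_of_nonneg_left hΩ.le hW hWV)

end Entropy

lemma ZECode.eqv1k_of_phi1_eq {A B Z : Type*} {k : ℕ} {f : A → A → A → B}
    (c : ZECode A B Z k f) (a3 : Fin k → A) {x y : Fin k → A}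
    (h : c.phi1 x (c.phi31 a3) = c.phi1 y (c.phi31 a3)) : eqv1k f a3 x y := by
  intro i b
  have hxy := c.zero_error x (fun _ => b) a3
  rw [h, c.zero_error y (fun _ => b) a3] at hxy
  exact (congrFun hxy i).symm

theorem stmt_9_general {A B Z : Type*} [Fintype A]
    {k : ℕ} (f : A → A → A → B) (c : ZECode A B Z k f)
    (a3 : Fin k → A) :
    ∑ z ∈ Finset.univ.image (fun x1 : Fin k → A => c.phi1 x1 (c.phi31 a3)),
      (((Finset.univ.filter fun x1 : Fin k → A => c.phi1 x1 (c.phi31 a3) = z).card : ℝ) /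
          (Fintype.card A : ℝ) ^ k) *
        Real.logb 2 ((Fintype.card A : ℝ) ^ k /
          ((Finset.univ.filter fun x1 : Fin k → A => c.phi1 x1 (c.phi31 a3) = z).card : ℝ)) ≥
    ∑ q ∈ Finset.univ.image (Quotient.mk (eqv1kSetoid f a3)),
      (((Finset.univ.filter fun x : Fin k → A =>
          Quotient.mk (eqv1kSetoid f a3) x = q).card : ℝ) / (Fintype.card A : ℝ) ^ k) *
        Real.logb 2 ((Fintype.card A : ℝ) ^ k /
          ((Finset.univ.filter fun x : Fin k → A =>
            Quotient.mk (eqv1kSetoid f a3) x = q).card : ℝ)) := by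
  have hle : uH (Quotient.mk (eqv1kSetoid f a3)) ≤
      uH fun x1 : Fin k → A => c.phi1 x1 (c.phi31 a3) :=
    uH_le_uH_of_factorsThrough fun _ _ h => Quotient.sound (c.eqv1k_of_phi1_eq a3 h)
  simp only [uH, Fintype.card_fun, Fintype.card_fin, Nat.cast_pow] at hle
  -- the statement decides `⟦x⟧ = q` by `Quotient.decidableEq`, `uH` classically
  convert hle

/-- Entropy of the label distribution `Z1 | X3 = a3` (with `X1` uniform) is at
least the entropy of the `≡^{a3}|₁` equivalence-class-size distribution. -/
theorem stmt_9 {A B Z : Type*} [Fintype A] [Fintype B] [Fintype Z]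
    (hA : 1 < Fintype.card A) (hZ : 1 < Fintype.card Z)
    {k : ℕ} (hk : 1 ≤ k) (f : A → A → A → B) (c : ZECode A B Z k f)
    (a3 : Fin k → A) :
    ∑ z ∈ Finset.univ.image (fun x1 : Fin k → A => c.phi1 x1 (c.phi31 a3)),
      (((Finset.univ.filter fun x1 : Fin k → A => c.phi1 x1 (c.phi31 a3) = z).card : ℝ) /
          (Fintype.card A : ℝ) ^ k) *
        Real.logb 2 ((Fintype.card A : ℝ) ^ k /
          ((Finset.univ.filter fun x1 : Fin k → A => c.phi1 x1 (c.phi31 a3) = z).card : ℝ)) ≥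
    ∑ q ∈ Finset.univ.image (Quotient.mk (eqv1kSetoid f a3)),
      (((Finset.univ.filter fun x : Fin k → A =>
          Quotient.mk (eqv1kSetoid f a3) x = q).card : ℝ) / (Fintype.card A : ℝ) ^ k) *
        Real.logb 2 ((Fintype.card A : ℝ) ^ k /
          ((Finset.univ.filter fun x : Fin k → A =>
            Quotient.mk (eqv1kSetoid f a3) x = q).card : ℝ)) :=
  stmt_9_general f c a3
end

section
/- For any zero-error code for f with block length k, any b ∈ B^k and any a3 ∈ A^k such that A123(b, a3) := {(x1, x2) ∈ A^k × A^k : f^k(x1, x2, a3) = b} is nonempty, the following majorization holds: for every finite set T of pairs of strings over Z, there exists a collection U of at most |T| distinct pairs (C1, C2), where C1 is an equivalence class of ≡^{a3}|_1, C2 is an equivalence class of ≡^{a3}|_2, and (C1 × C2) ∩ A123(b, a3) ≠ ∅, such that |{(x1, x2) ∈ A123(b, a3) : (φ1(x1, φ31(a3)), φ2(x2, φ32(a3))) ∈ T}| ≤ ∑_{(C1,C2) ∈ U} |C1|·|C2|. -/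
open Classical

/-- Majorization for the pair label `(Z1, Z2)` conditioned on the demand
function value `b` and `X3 = a3`: the number of pairs in `A123(b, a3)` whose pair of labels
lies in a set `T` is bounded by the total size of at most `|T|` products `C1 × C2` of
equivalence classes meeting `A123(b, a3)`. -/
theorem stmt_11 {A B Z : Type*} [Fintype A] [Fintype B] [Fintype Z]
    (hA : 1 < Fintype.card A) (hZ : 1 < Fintype.card Z)
    {k : ℕ} (hk : 1 ≤ k) (f : A → A → A → B) (c : ZECode A B Z k f)
    (b : Fin k → B) (a3 : Fin k → A)
    (hne : ∃ x1 x2 : Fin k → A, (fun i => f (x1 i) (x2 i) (a3 i)) = b)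
    (T : Finset (List Z × List Z)) :
    ∃ U : Finset (Quotient (eqv1kSetoid f a3) × Quotient (eqv2kSetoid f a3)),
      U.card ≤ T.card ∧
      (∀ p ∈ U, ∃ x1 x2 : Fin k → A,
        Quotient.mk (eqv1kSetoid f a3) x1 = p.1 ∧
        Quotient.mk (eqv2kSetoid f a3) x2 = p.2 ∧
        (fun i => f (x1 i) (x2 i) (a3 i)) = b) ∧
      (Finset.univ.filter fun xy : (Fin k → A) × (Fin k → A) =>
          (fun i => f (xy.1 i) (xy.2 i) (a3 i)) = b ∧
          (c.phi1 xy.1 (c.phi31 a3), c.phi2 xy.2 (c.phi32 a3)) ∈ T).card ≤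
        ∑ p ∈ U,
          (Finset.univ.filter fun x : Fin k → A =>
            Quotient.mk (eqv1kSetoid f a3) x = p.1).card *
          (Finset.univ.filter fun x : Fin k → A =>
            Quotient.mk (eqv2kSetoid f a3) x = p.2).card := by
  classical
  set S : Finset ((Fin k → A) × (Fin k → A)) :=
    Finset.univ.filter (fun xy : (Fin k → A) × (Fin k → A) =>
      (fun i => f (xy.1 i) (xy.2 i) (a3 i)) = b ∧
      (c.phi1 xy.1 (c.phi31 a3), c.phi2 xy.2 (c.phi32 a3)) ∈ T) with hS
  have key1 : ∀ x y : Fin k → A, c.phi1 x (c.phi31 a3) = c.phi1 y (c.phi31 a3) →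
      Quotient.mk (eqv1kSetoid f a3) x = Quotient.mk (eqv1kSetoid f a3) y := by
    intro x y h
    apply Quotient.sound
    intro i x2
    have h1 := c.zero_error x (fun _ => x2) a3
    have h2 := c.zero_error y (fun _ => x2) a3
    rw [h] at h1
    exact congrFun (h1.symm.trans h2) i
  have key2 : ∀ x y : Fin k → A, c.phi2 x (c.phi32 a3) = c.phi2 y (c.phi32 a3) →
      Quotient.mk (eqv2kSetoid f a3) x = Quotient.mk (eqv2kSetoid f a3) y := by
    intro x y h
    apply Quotient.sound
    intro i x1
    have h1 := c.zero_error (fun _ => x1) x a3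
    have h2 := c.zero_error (fun _ => x1) y a3
    rw [h] at h1
    exact congrFun (h1.symm.trans h2) i
  set g : (Fin k → A) × (Fin k → A) →
      Quotient (eqv1kSetoid f a3) × Quotient (eqv2kSetoid f a3) :=
    fun xy => (Quotient.mk (eqv1kSetoid f a3) xy.1, Quotient.mk (eqv2kSetoid f a3) xy.2)
    with hg
  set L : (Fin k → A) × (Fin k → A) → List Z × List Z :=
    fun xy => (c.phi1 xy.1 (c.phi31 a3), c.phi2 xy.2 (c.phi32 a3)) with hL
  have keyL : ∀ xy xy' : (Fin k → A) × (Fin k → A), L xy = L xy' → g xy = g xy' := by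
    intro xy xy' h
    have h1 : c.phi1 xy.1 (c.phi31 a3) = c.phi1 xy'.1 (c.phi31 a3) :=
      congrArg Prod.fst h
    have h2 : c.phi2 xy.2 (c.phi32 a3) = c.phi2 xy'.2 (c.phi32 a3) :=
      congrArg Prod.snd h
    exact Prod.ext (key1 _ _ h1) (key2 _ _ h2)
  refine ⟨S.image g, ?_, ?_, ?_⟩
  · -- card bound
    have : ∀ p ∈ S.image g, ∃ xy, xy ∈ S ∧ g xy = p := by
      intro p hp
      rcases Finset.mem_image.1 hp with ⟨xy, hxy, hgxy⟩
      exact ⟨xy, hxy, hgxy⟩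
    set F : Quotient (eqv1kSetoid f a3) × Quotient (eqv2kSetoid f a3) → List Z × List Z :=
      fun p => if h : ∃ xy, xy ∈ S ∧ g xy = p then L h.choose else ([], []) with hF
    apply Finset.card_le_card_of_injOn F
    · intro p hp
      have hex := this p hp
      rw [hF]
      simp only [dif_pos hex]
      exact (Finset.mem_filter.1 hex.choose_spec.1).2.2
    · intro p hp q hq hFpq
      have hexp := this p hp
      have hexq := this q hq
      rw [hF] at hFpq
      simp only [dif_pos hexp, dif_pos hexq] at hFpq
      have := keyL _ _ hFpq
      rw [hexp.choose_spec.2, hexq.choose_spec.2] at this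
      exact this
  · -- representatives
    intro p hp
    rcases Finset.mem_image.1 hp with ⟨xy, hxy, hgxy⟩
    rw [Finset.mem_filter] at hxy
    exact ⟨xy.1, xy.2, congrArg Prod.fst hgxy, congrArg Prod.snd hgxy, hxy.2.1⟩
  · -- the counting bound
    have hcard : S.card = ∑ p ∈ S.image g, (S.filter fun xy => g xy = p).card :=
      Finset.card_eq_sum_card_fiberwise (fun xy hxy => Finset.mem_image_of_mem g hxy)
    rw [hcard]
    refine Finset.sum_le_sum ?_
    intro p hp
    have hsub : (S.filter fun xy => g xy = p) ⊆
        (Finset.univ.filter fun x : Fin k → A =>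
          Quotient.mk (eqv1kSetoid f a3) x = p.1) ×ˢ
        (Finset.univ.filter fun x : Fin k → A =>
          Quotient.mk (eqv2kSetoid f a3) x = p.2) := by
      intro xy hxy
      rw [Finset.mem_filter] at hxy
      rw [Finset.mem_product, Finset.mem_filter, Finset.mem_filter]
      exact ⟨⟨Finset.mem_univ _, congrArg Prod.fst hxy.2⟩,
        ⟨Finset.mem_univ _, congrArg Prod.snd hxy.2⟩⟩
    calc (S.filter fun xy => g xy = p).card ≤ _ := Finset.card_le_card hsub
      _ = _ := Finset.card_product _ _
end

section
/- For any zero-error code for f with block length k, with (X1, X2, X3) uniformly distributed on A^k × A^k × A^k, Z1 := φ1(X1, φ31(X3)), Z2 := φ2(X2, φ32(X3)), and F := f^k(X1, X2, X3), one has H(Z1) + H(Z2) ≥ H(F) + H((Z1, Z2) | F, X3). -/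
open Classical

section EntropyHelpers
set_option linter.unusedSectionVars false
set_option maxHeartbeats 1000000
variable {Ω : Type*} [Fintype Ω]

noncomputable def nfib {S : Type*} (g : Ω → S) (ω : Ω) : ℕ :=
  (Finset.univ.filter fun ω' => g ω' = g ω).card

noncomputable def Lent {S : Type*} (g : Ω → S) : ℝ :=
  ∑ ω, Real.logb 2 (nfib g ω)

lemma nfib_pos {S : Type*} (g : Ω → S) (ω : Ω) : 0 < nfib g ω :=
  Finset.card_pos.2 ⟨ω, by simp [nfib]⟩

lemma nfib_cast_pos {S : Type*} (g : Ω → S) (ω : Ω) : (0:ℝ) < (nfib g ω : ℝ) := by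
  exact_mod_cast nfib_pos g ω

lemma Lent_congr {S T : Type*} {g : Ω → S} {h : Ω → T}
    (H : ∀ ω ω', g ω' = g ω ↔ h ω' = h ω) : Lent g = Lent h := by
  refine Finset.sum_congr rfl fun ω _ => ?_
  have : (Finset.univ.filter fun ω' => g ω' = g ω) =
      (Finset.univ.filter fun ω' => h ω' = h ω) := by
    apply Finset.filter_congr
    intro x _
    simpa using H ω x
  simp [nfib, this]

lemma sum_logb_nonpos (r : Ω → ℝ) (hr : ∀ ω, 0 < r ω)
    (h : ∑ ω, r ω ≤ (Fintype.card Ω : ℝ)) : ∑ ω, Real.logb 2 (r ω) ≤ 0 := by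
  have h2 : (0:ℝ) < Real.log 2 := Real.log_pos one_lt_two
  have hlog : ∑ ω, Real.log (r ω) ≤ 0 := by
    calc ∑ ω, Real.log (r ω) ≤ ∑ ω, (r ω - 1) :=
          Finset.sum_le_sum fun ω _ => Real.log_le_sub_one_of_pos (hr ω)
      _ = (∑ ω, r ω) - (Fintype.card Ω : ℝ) := by
          rw [Finset.sum_sub_distrib, Finset.sum_const, Finset.card_univ]; simp
      _ ≤ 0 := by linarith
  have : ∑ ω, Real.logb 2 (r ω) = (∑ ω, Real.log (r ω)) / Real.log 2 := by
    rw [Finset.sum_div]; rfl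
  rw [this]
  exact div_nonpos_of_nonpos_of_nonneg hlog h2.le

lemma sum_div_fibercard {T : Type*} (s : Finset Ω) (g : Ω → T) (F : T → ℝ) :
    ∑ ω ∈ s, F (g ω) / ((s.filter fun ω' => g ω' = g ω).card : ℝ)
      = ∑ t ∈ s.image g, F t := by
  rw [← Finset.sum_fiberwise_of_maps_to (g := g) (t := s.image g)
      (fun ω hω => Finset.mem_image_of_mem g hω)
      (f := fun ω => F (g ω) / ((s.filter fun ω' => g ω' = g ω).card : ℝ))]
  refine Finset.sum_congr rfl fun t ht => ?_
  have hne : (s.filter fun ω' => g ω' = t).Nonempty := by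
    obtain ⟨ω, hω, rfl⟩ := Finset.mem_image.1 ht
    exact ⟨ω, Finset.mem_filter.2 ⟨hω, rfl⟩⟩
  have hcard : (0:ℝ) < ((s.filter fun ω' => g ω' = t).card : ℝ) := by
    exact_mod_cast Finset.card_pos.2 hne
  calc ∑ ω ∈ s.filter (fun x => g x = t),
        F (g ω) / ((s.filter fun ω' => g ω' = g ω).card : ℝ)
      = ∑ _ω ∈ s.filter (fun x => g x = t),
        F t / ((s.filter fun ω' => g ω' = t).card : ℝ) := by
        refine Finset.sum_congr rfl fun ω hω => ?_
        have : g ω = t := (Finset.mem_filter.1 hω).2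
        rw [this]
    _ = F t := by
        rw [Finset.sum_const, nsmul_eq_mul]
        field_simp

-- key counting bound
lemma sum_ratio_le {S T U : Type*} (u : Ω → S) (v : Ω → T) (w : Ω → U) :
    ∑ ω, ((nfib (fun x => (u x, v x)) ω : ℝ) * (nfib (fun x => (v x, w x)) ω)) /
        ((nfib v ω : ℝ) * (nfib (fun x => (u x, v x, w x)) ω)) ≤ (Fintype.card Ω : ℝ) := by
  classical
  -- abbreviations
  set b : Ω → ℝ := fun ω => (nfib (fun x => (v x, w x)) ω : ℝ) with hb
  set vv : Ω → ℝ := fun ω => (nfib v ω : ℝ) with hvv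
  set c : Ω → ℝ := fun ω => (nfib (fun x => (u x, v x, w x)) ω : ℝ) with hc
  -- the fiber of (u,v) through x
  set s : Ω → Finset Ω := fun x => Finset.univ.filter fun y => u y = u x ∧ v y = v x with hs
  -- step 1: rewrite a ω as a sum of indicators and swap
  have step1 : ∑ ω, ((nfib (fun x => (u x, v x)) ω : ℝ) * b ω) / (vv ω * c ω)
      = ∑ x, ∑ ω ∈ s x, b ω / (vv ω * c ω) := by
    have ha : ∀ ω, (nfib (fun x => (u x, v x)) ω : ℝ)
        = ∑ x, if u x = u ω ∧ v x = v ω then (1:ℝ) else 0 := by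
      intro ω
      rw [Finset.sum_boole]
      congr 1
      unfold nfib
      congr 1
      ext y
      simp [Prod.ext_iff]
    calc ∑ ω, ((nfib (fun x => (u x, v x)) ω : ℝ) * b ω) / (vv ω * c ω)
        = ∑ ω, ∑ x, (if u x = u ω ∧ v x = v ω then (1:ℝ) else 0) * (b ω / (vv ω * c ω)) := by
          refine Finset.sum_congr rfl fun ω _ => ?_
          rw [← Finset.sum_mul, ← ha ω]
          ring
      _ = ∑ x, ∑ ω, (if u x = u ω ∧ v x = v ω then (1:ℝ) else 0) * (b ω / (vv ω * c ω)) :=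
          Finset.sum_comm
      _ = ∑ x, ∑ ω ∈ s x, b ω / (vv ω * c ω) := by
          refine Finset.sum_congr rfl fun x _ => ?_
          rw [Finset.sum_filter]
          refine Finset.sum_congr rfl fun ω _ => ?_
          by_cases h : u ω = u x ∧ v ω = v x
          · have h' : u x = u ω ∧ v x = v ω := ⟨h.1.symm, h.2.symm⟩
            rw [if_pos h', if_pos h, one_mul]
          · have h' : ¬ (u x = u ω ∧ v x = v ω) := by
              intro h2; exact h ⟨h2.1.symm, h2.2.symm⟩
            rw [if_neg h', if_neg h, zero_mul]
  rw [step1]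
  -- step 2: bound each inner sum by 1
  have step2 : ∀ x, ∑ ω ∈ s x, b ω / (vv ω * c ω) ≤ 1 := by
    intro x
    have hvvx : (0:ℝ) < vv x := by
      simp only [hvv]; exact_mod_cast nfib_pos v x
    -- on s x, vv ω = vv x
    have hvmem : ∀ ω ∈ s x, v ω = v x := fun ω hω => ((Finset.mem_filter.1 hω).2).2
    have humem : ∀ ω ∈ s x, u ω = u x := fun ω hω => ((Finset.mem_filter.1 hω).2).1
    -- B t : number of y with v y = v x ∧ w y = t
    set B : U → ℝ := fun t => ((Finset.univ.filter fun y => v y = v x ∧ w y = t).card : ℝ)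
      with hB
    have key : ∀ ω ∈ s x, b ω / (vv ω * c ω)
        = (B (w ω) / (((s x).filter fun ω' => w ω' = w ω).card : ℝ)) / vv x := by
      intro ω hω
      have hv : v ω = v x := hvmem ω hω
      have hu : u ω = u x := humem ω hω
      have hbω : b ω = B (w ω) := by
        simp only [hb, hB, nfib]
        congr 2
        ext y
        simp [Prod.ext_iff, hv]
      have hcω : c ω = (((s x).filter fun ω' => w ω' = w ω).card : ℝ) := by
        simp only [hc, nfib, hs]
        congr 2
        rw [Finset.filter_filter]
        ext y
        simp only [Prod.ext_iff, Finset.mem_filter, Finset.mem_univ, true_and]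
        constructor
        · rintro ⟨h1, h2, h3⟩; exact ⟨⟨h1.trans hu, h2.trans hv⟩, h3⟩
        · rintro ⟨⟨h1, h2⟩, h3⟩; exact ⟨h1.trans hu.symm, h2.trans hv.symm, h3⟩
      have hvvω : vv ω = vv x := by simp only [hvv, nfib, hv]
      rw [hbω, hcω, hvvω]
      ring
    calc ∑ ω ∈ s x, b ω / (vv ω * c ω)
        = ∑ ω ∈ s x, (B (w ω) / (((s x).filter fun ω' => w ω' = w ω).card : ℝ)) / vv x :=
          Finset.sum_congr rfl key
      _ = (∑ ω ∈ s x, B (w ω) / (((s x).filter fun ω' => w ω' = w ω).card : ℝ)) / vv x := by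
          rw [Finset.sum_div]
      _ = (∑ t ∈ (s x).image w, B t) / vv x := by rw [sum_div_fibercard]
      _ ≤ vv x / vv x := by
          gcongr
          -- ∑ t ∈ (s x).image w, B t ≤ vv x
          have himg : (s x).image w ⊆ (Finset.univ.filter fun y => v y = v x).image w := by
            apply Finset.image_subset_image
            intro y hy
            exact Finset.mem_filter.2 ⟨Finset.mem_univ y, ((Finset.mem_filter.1 hy).2).2⟩
          have hnat : (Finset.univ.filter fun y => v y = v x).card
              = ∑ t ∈ ((Finset.univ.filter fun y => v y = v x).image w),
                  ((Finset.univ.filter fun y => v y = v x).filter fun y => w y = t).card :=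
            Finset.card_eq_sum_card_image w _
          have hvvx' : vv x = ∑ t ∈ ((Finset.univ.filter fun y => v y = v x).image w),
              (((Finset.univ.filter fun y => v y = v x).filter fun y => w y = t).card : ℝ) := by
            simp only [hvv, nfib]
            rw [hnat]
            push_cast
            rfl
          rw [hvvx']
          have hBt : ∀ t, B t
              = (((Finset.univ.filter fun y => v y = v x).filter fun y => w y = t).card : ℝ) := by
            intro t
            simp only [hB]
            congr 1
            rw [Finset.filter_filter]
          calc ∑ t ∈ (s x).image w, B t
              = ∑ t ∈ (s x).image w,
                (((Finset.univ.filter fun y => v y = v x).filter fun y => w y = t).card : ℝ) :=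
                Finset.sum_congr rfl fun t _ => hBt t
            _ ≤ _ := Finset.sum_le_sum_of_subset_of_nonneg himg
                (fun t _ _ => by positivity)
      _ = 1 := div_self hvvx.ne'
  calc ∑ x, ∑ ω ∈ s x, b ω / (vv ω * c ω) ≤ ∑ x : Ω, (1:ℝ) :=
        Finset.sum_le_sum fun x _ => step2 x
    _ = (Fintype.card Ω : ℝ) := by simp [Finset.card_univ]

lemma Lent_submod {S T U : Type*} (u : Ω → S) (v : Ω → T) (w : Ω → U) :
    Lent (fun ω => (u ω, v ω)) + Lent (fun ω => (v ω, w ω)) ≤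
      Lent v + Lent (fun ω => (u ω, v ω, w ω)) := by
  have key : ∑ ω, Real.logb 2
      (((nfib (fun x => (u x, v x)) ω : ℝ) * (nfib (fun x => (v x, w x)) ω)) /
        ((nfib v ω : ℝ) * (nfib (fun x => (u x, v x, w x)) ω))) ≤ 0 := by
    apply sum_logb_nonpos _ ?_ (sum_ratio_le u v w)
    intro ω
    have h1 : (0:ℝ) < (nfib (fun x => (u x, v x)) ω : ℝ) := by exact_mod_cast nfib_pos _ ω
    have h2 : (0:ℝ) < (nfib (fun x => (v x, w x)) ω : ℝ) := by exact_mod_cast nfib_pos _ ω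
    have h3 : (0:ℝ) < (nfib v ω : ℝ) := by exact_mod_cast nfib_pos _ ω
    have h4 : (0:ℝ) < (nfib (fun x => (u x, v x, w x)) ω : ℝ) := by exact_mod_cast nfib_pos _ ω
    positivity
  have expand : ∀ ω : Ω, Real.logb 2
      (((nfib (fun x => (u x, v x)) ω : ℝ) * (nfib (fun x => (v x, w x)) ω)) /
        ((nfib v ω : ℝ) * (nfib (fun x => (u x, v x, w x)) ω)))
      = Real.logb 2 (nfib (fun x => (u x, v x)) ω) + Real.logb 2 (nfib (fun x => (v x, w x)) ω)
        - (Real.logb 2 (nfib v ω) + Real.logb 2 (nfib (fun x => (u x, v x, w x)) ω)) := by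
    intro ω
    have h1 : ((nfib (fun x => (u x, v x)) ω : ℝ)) ≠ 0 := by
      exact_mod_cast (nfib_pos _ ω).ne'
    have h2 : ((nfib (fun x => (v x, w x)) ω : ℝ)) ≠ 0 := by
      exact_mod_cast (nfib_pos _ ω).ne'
    have h3 : ((nfib v ω : ℝ)) ≠ 0 := by exact_mod_cast (nfib_pos v ω).ne'
    have h4 : ((nfib (fun x => (u x, v x, w x)) ω : ℝ)) ≠ 0 := by
      exact_mod_cast (nfib_pos _ ω).ne'
    rw [Real.logb_div (by positivity) (by positivity), Real.logb_mul h1 h2,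
      Real.logb_mul h3 h4]
  rw [Finset.sum_congr rfl (fun ω _ => expand ω)] at key
  rw [Finset.sum_sub_distrib, Finset.sum_add_distrib, Finset.sum_add_distrib] at key
  unfold Lent
  linarith

lemma Lent_eq_sum_image {S : Type*} (g : Ω → S) :
    Lent g = ∑ s ∈ Finset.univ.image g,
      ((Finset.univ.filter fun ω => g ω = s).card : ℝ) *
        Real.logb 2 ((Finset.univ.filter fun ω => g ω = s).card) := by
  unfold Lent
  rw [← Finset.sum_fiberwise_of_maps_to (g := g) (t := Finset.univ.image g)
      (fun ω _ => Finset.mem_image_of_mem g (Finset.mem_univ ω))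
      (f := fun ω => Real.logb 2 (nfib g ω))]
  refine Finset.sum_congr rfl fun s hs => ?_
  calc ∑ ω ∈ Finset.univ.filter fun x => g x = s, Real.logb 2 (nfib g ω)
      = ∑ _ω ∈ Finset.univ.filter fun x => g x = s,
          Real.logb 2 ((Finset.univ.filter fun ω => g ω = s).card) := by
        refine Finset.sum_congr rfl fun ω hω => ?_
        have : g ω = s := (Finset.mem_filter.1 hω).2
        simp only [nfib, this]
    _ = _ := by rw [Finset.sum_const, nsmul_eq_mul]


lemma uH_eq {S : Type*} [Nonempty Ω] (W : Ω → S) :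
    uH W = Real.logb 2 (Fintype.card Ω) - Lent W / (Fintype.card Ω) := by
  have hN : (0:ℝ) < (Fintype.card Ω : ℝ) := by exact_mod_cast Fintype.card_pos
  have hsum : ∑ s ∈ Finset.univ.image W,
      ((Finset.univ.filter fun ω => W ω = s).card : ℝ) = (Fintype.card Ω : ℝ) := by
    rw [← Nat.cast_sum]
    rw [← Finset.card_eq_sum_card_fiberwise
      (fun ω _ => Finset.mem_image_of_mem W (Finset.mem_univ ω))]
    simp [Finset.card_univ]
  unfold uH
  calc ∑ s ∈ Finset.univ.image W,
        (((Finset.univ.filter fun ω => W ω = s).card : ℝ) / (Fintype.card Ω : ℝ)) *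
          Real.logb 2 ((Fintype.card Ω : ℝ) / ((Finset.univ.filter fun ω => W ω = s).card : ℝ))
      = ∑ s ∈ Finset.univ.image W,
          (((Finset.univ.filter fun ω => W ω = s).card : ℝ) / (Fintype.card Ω : ℝ)) *
            Real.logb 2 (Fintype.card Ω : ℝ) -
        ∑ s ∈ Finset.univ.image W,
          (((Finset.univ.filter fun ω => W ω = s).card : ℝ) *
            Real.logb 2 ((Finset.univ.filter fun ω => W ω = s).card : ℝ)) / (Fintype.card Ω : ℝ)
        := by
        rw [← Finset.sum_sub_distrib]
        refine Finset.sum_congr rfl fun s hs => ?_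
        have hc : (0:ℝ) < ((Finset.univ.filter fun ω => W ω = s).card : ℝ) := by
          obtain ⟨ω, _, rfl⟩ := Finset.mem_image.1 hs
          exact_mod_cast Finset.card_pos.2 ⟨ω, by simp⟩
        rw [Real.logb_div hN.ne' hc.ne']
        ring
    _ = Real.logb 2 (Fintype.card Ω) - Lent W / (Fintype.card Ω) := by
        rw [← Finset.sum_mul, ← Finset.sum_div, ← Finset.sum_div, hsum,
          div_self hN.ne', one_mul, ← Lent_eq_sum_image]

lemma uCondH_eq {S T : Type*} [Nonempty Ω] (W : Ω → S) (V : Ω → T) :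
    uCondH W V = (Lent V - Lent (fun ω => (W ω, V ω))) / (Fintype.card Ω : ℝ) := by
  have hN : (0:ℝ) < (Fintype.card Ω : ℝ) := by exact_mod_cast Fintype.card_pos
  unfold uCondH
  have step1 : ∀ v ∈ Finset.univ.image V, ∀ s ∈ Finset.univ.image W,
      (((Finset.univ.filter fun ω => W ω = s ∧ V ω = v).card : ℝ) / (Fintype.card Ω : ℝ)) *
        Real.logb 2 (((Finset.univ.filter fun ω => V ω = v).card : ℝ) /
          ((Finset.univ.filter fun ω => W ω = s ∧ V ω = v).card : ℝ))
      = ((Finset.univ.filter fun ω => W ω = s ∧ V ω = v).card : ℝ) *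
          Real.logb 2 ((Finset.univ.filter fun ω => V ω = v).card : ℝ) / (Fintype.card Ω : ℝ)
        - ((Finset.univ.filter fun ω => W ω = s ∧ V ω = v).card : ℝ) *
          Real.logb 2 ((Finset.univ.filter fun ω => W ω = s ∧ V ω = v).card : ℝ) /
            (Fintype.card Ω : ℝ) := by
    intro v hv s hs
    by_cases hz : (Finset.univ.filter fun ω => W ω = s ∧ V ω = v).card = 0
    · rw [hz]; simp
    · have hc : (0:ℝ) < ((Finset.univ.filter fun ω => W ω = s ∧ V ω = v).card : ℝ) := by
        exact_mod_cast Nat.pos_of_ne_zero hz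
      have hsub : (Finset.univ.filter fun ω => W ω = s ∧ V ω = v) ⊆
          (Finset.univ.filter fun ω => V ω = v) := by
        intro ω hω
        exact Finset.mem_filter.2 ⟨Finset.mem_univ ω, ((Finset.mem_filter.1 hω).2).2⟩
      have hcv : (0:ℝ) < ((Finset.univ.filter fun ω => V ω = v).card : ℝ) := by
        have := Finset.card_le_card hsub
        have : 0 < (Finset.univ.filter fun ω => V ω = v).card := by
          omega
        exact_mod_cast this
      rw [Real.logb_div hcv.ne' hc.ne']
      ring
  rw [Finset.sum_congr rfl (fun v hv => Finset.sum_congr rfl (fun s hs => step1 v hv s hs))]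
  simp only [Finset.sum_sub_distrib]
  have part1 : ∑ v ∈ Finset.univ.image V, ∑ s ∈ Finset.univ.image W,
      ((Finset.univ.filter fun ω => W ω = s ∧ V ω = v).card : ℝ) *
        Real.logb 2 ((Finset.univ.filter fun ω => V ω = v).card : ℝ) / (Fintype.card Ω : ℝ)
      = Lent V / (Fintype.card Ω : ℝ) := by
    rw [Lent_eq_sum_image, Finset.sum_div]
    refine Finset.sum_congr rfl fun v hv => ?_
    have hfib : ∑ s ∈ Finset.univ.image W,
        ((Finset.univ.filter fun ω => W ω = s ∧ V ω = v).card : ℝ)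
        = ((Finset.univ.filter fun ω => V ω = v).card : ℝ) := by
      rw [← Nat.cast_sum]
      norm_cast
      rw [Finset.card_eq_sum_card_fiberwise (f := W) (t := Finset.univ.image W)
        (fun ω _ => Finset.mem_image_of_mem W (Finset.mem_univ ω))]
      refine Finset.sum_congr rfl fun s hs => ?_
      congr 1
      rw [Finset.filter_filter]
      ext ω
      simp only [Finset.mem_filter, Finset.mem_univ, true_and]
      tauto
    rw [← Finset.sum_div, ← Finset.sum_mul, hfib]
  have part2 : ∑ v ∈ Finset.univ.image V, ∑ s ∈ Finset.univ.image W,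
      ((Finset.univ.filter fun ω => W ω = s ∧ V ω = v).card : ℝ) *
        Real.logb 2 ((Finset.univ.filter fun ω => W ω = s ∧ V ω = v).card : ℝ) /
          (Fintype.card Ω : ℝ)
      = Lent (fun ω => (W ω, V ω)) / (Fintype.card Ω : ℝ) := by
    rw [Lent_eq_sum_image]
    simp only [← Finset.sum_div]
    congr 1
    -- reduce to a sum over the product, then restrict to the image
    have hswap : ∑ v ∈ Finset.univ.image V, ∑ s ∈ Finset.univ.image W,
        ((Finset.univ.filter fun ω => W ω = s ∧ V ω = v).card : ℝ) *
          Real.logb 2 ((Finset.univ.filter fun ω => W ω = s ∧ V ω = v).card : ℝ)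
        = ∑ p ∈ (Finset.univ.image W) ×ˢ (Finset.univ.image V),
          ((Finset.univ.filter fun ω => W ω = p.1 ∧ V ω = p.2).card : ℝ) *
            Real.logb 2 ((Finset.univ.filter fun ω => W ω = p.1 ∧ V ω = p.2).card : ℝ) := by
      rw [Finset.sum_product]
      exact Finset.sum_comm
    rw [hswap]
    have himg : Finset.univ.image (fun ω => (W ω, V ω)) ⊆
        (Finset.univ.image W) ×ˢ (Finset.univ.image V) := by
      intro p hp
      obtain ⟨ω, _, rfl⟩ := Finset.mem_image.1 hp
      exact Finset.mem_product.2 ⟨Finset.mem_image_of_mem _ (Finset.mem_univ ω),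
        Finset.mem_image_of_mem _ (Finset.mem_univ ω)⟩
    rw [← Finset.sum_subset himg ?vanish]
    · refine Finset.sum_congr (by ext p; simp) fun p hp => ?_
      have hfilter : (Finset.univ.filter fun ω => W ω = p.1 ∧ V ω = p.2).card
          = (Finset.univ.filter fun ω => (W ω, V ω) = p).card := by
        apply Finset.card_bij (fun ω _ => ω) <;> intro ω hω <;>
          simp_all [Prod.ext_iff]
      rw [hfilter]
      congr!
    case vanish =>
      intro p _ hp
      have : (Finset.univ.filter fun ω => W ω = p.1 ∧ V ω = p.2) = ∅ := by
        rw [Finset.filter_eq_empty_iff]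
        intro ω _ h
        exact hp (Finset.mem_image.2 ⟨ω, Finset.mem_univ ω, by
          rw [Prod.ext_iff]; exact ⟨h.1, h.2⟩⟩)
      rw [this]
      simp
  rw [part1, part2, sub_div]

end EntropyHelpers

section AuxMain
set_option maxHeartbeats 1000000

lemma stmt12_aux {Ω L1 L2 M P : Type*} [Fintype Ω] [Nonempty Ω]
    (Z1 : Ω → L1) (Z2 : Ω → L2) (F : Ω → M) (X3 : Ω → P)
    (hdet : ∀ ω ω' : Ω, Z1 ω' = Z1 ω → Z2 ω' = Z2 ω → F ω' = F ω) :
    uH F + uCondH (fun ω => (Z1 ω, Z2 ω)) (fun ω => (F ω, X3 ω)) ≤ uH Z1 + uH Z2 := by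
  classical
  have hN : (0:ℝ) < (Fintype.card Ω : ℝ) := by exact_mod_cast Fintype.card_pos
  have sub1 : Lent Z1 + Lent Z2 ≤
      (Fintype.card Ω : ℝ) * Real.logb 2 (Fintype.card Ω) +
        Lent (fun ω => (Z1 ω, Z2 ω)) := by
    have h := Lent_submod Z1 (fun _ : Ω => ()) Z2
    have e1 : Lent (fun ω : Ω => (Z1 ω, ())) = Lent Z1 :=
      (Lent_congr (by intro ω ω'; simp [Prod.ext_iff])).symm
    have e2 : Lent (fun ω : Ω => ((), Z2 ω)) = Lent Z2 :=
      (Lent_congr (by intro ω ω'; simp [Prod.ext_iff])).symm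
    have e3 : Lent (fun ω : Ω => (Z1 ω, (), Z2 ω)) = Lent (fun ω => (Z1 ω, Z2 ω)) := by
      apply Lent_congr
      intro ω ω'
      simp [Prod.ext_iff]
    have e4 : Lent (fun _ : Ω => ()) =
        (Fintype.card Ω : ℝ) * Real.logb 2 (Fintype.card Ω) := by
      have hconst : ∀ ω : Ω, nfib (fun _ : Ω => ()) ω = Fintype.card Ω := by
        intro ω; simp [nfib, Finset.card_univ]
      unfold Lent
      rw [Finset.sum_congr rfl fun ω _ => by rw [hconst ω]]
      rw [Finset.sum_const, nsmul_eq_mul, Finset.card_univ]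
    rw [e1, e2, e3, e4] at h
    exact h
  have sub2 : Lent (fun ω => ((Z1 ω, Z2 ω), F ω)) + Lent (fun ω => (F ω, X3 ω)) ≤
      Lent F + Lent (fun ω => ((Z1 ω, Z2 ω), F ω, X3 ω)) :=
    Lent_submod (fun ω => (Z1 ω, Z2 ω)) F X3
  have e5 : Lent (fun ω => ((Z1 ω, Z2 ω), F ω)) = Lent (fun ω => (Z1 ω, Z2 ω)) := by
    apply (Lent_congr ?_).symm
    intro ω ω'
    constructor
    · intro h
      have h1 : Z1 ω' = Z1 ω := congrArg Prod.fst h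
      have h2 : Z2 ω' = Z2 ω := congrArg Prod.snd h
      rw [Prod.ext_iff]
      exact ⟨h, hdet ω ω' h1 h2⟩
    · intro h
      exact congrArg Prod.fst h
  have key : Lent Z1 + Lent Z2 + Lent (fun ω => (F ω, X3 ω)) ≤
      (Fintype.card Ω : ℝ) * Real.logb 2 (Fintype.card Ω) + Lent F +
        Lent (fun ω => ((Z1 ω, Z2 ω), F ω, X3 ω)) := by linarith
  rw [uH_eq, uH_eq, uH_eq, uCondH_eq]
  have key2 : (Lent Z1 + Lent Z2 + Lent (fun ω => (F ω, X3 ω))) / (Fintype.card Ω : ℝ)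
      ≤ ((Fintype.card Ω : ℝ) * Real.logb 2 (Fintype.card Ω) + Lent F +
        Lent (fun ω => ((Z1 ω, Z2 ω), F ω, X3 ω))) / (Fintype.card Ω : ℝ) := by
    gcongr
  rw [add_div, add_div, add_div, add_div,
    mul_div_cancel_left₀ _ hN.ne'] at key2
  rw [sub_div]
  linarith

end AuxMain

/-- With `(X1, X2, X3)` uniform on `(A^k)³`,
`H(Z1) + H(Z2) ≥ H(F) + H((Z1, Z2) | (F, X3))`. -/
theorem stmt_12 {A B Z : Type*} [Fintype A] [Fintype B] [Fintype Z]
    (hA : 1 < Fintype.card A) (hZ : 1 < Fintype.card Z)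
    {k : ℕ} (hk : 1 ≤ k) (f : A → A → A → B) (c : ZECode A B Z k f) :
    uH (fun ω : (Fin k → A) × (Fin k → A) × (Fin k → A) => c.phi1 ω.1 (c.phi31 ω.2.2)) +
      uH (fun ω : (Fin k → A) × (Fin k → A) × (Fin k → A) => c.phi2 ω.2.1 (c.phi32 ω.2.2)) ≥
    uH (fun ω : (Fin k → A) × (Fin k → A) × (Fin k → A) =>
        fun i => f (ω.1 i) (ω.2.1 i) (ω.2.2 i)) +
      uCondH
        (fun ω : (Fin k → A) × (Fin k → A) × (Fin k → A) =>
          (c.phi1 ω.1 (c.phi31 ω.2.2), c.phi2 ω.2.1 (c.phi32 ω.2.2)))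
        (fun ω : (Fin k → A) × (Fin k → A) × (Fin k → A) =>
          ((fun i => f (ω.1 i) (ω.2.1 i) (ω.2.2 i)), ω.2.2)) := by
  have hAne : Nonempty A := Fintype.card_pos_iff.1 (by omega)
  haveI : Nonempty ((Fin k → A) × (Fin k → A) × (Fin k → A)) := by
    have h1 : Nonempty (Fin k → A) := ⟨fun _ => Classical.arbitrary A⟩
    exact ⟨⟨Classical.arbitrary _, Classical.arbitrary _, Classical.arbitrary _⟩⟩
  rw [ge_iff_le]
  refine stmt12_aux (fun ω : (Fin k → A) × (Fin k → A) × (Fin k → A) =>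
      c.phi1 ω.1 (c.phi31 ω.2.2))
    (fun ω => c.phi2 ω.2.1 (c.phi32 ω.2.2))
    (fun ω => fun i => f (ω.1 i) (ω.2.1 i) (ω.2.2 i))
    (fun ω => ω.2.2) ?_
  intro ω ω' h1 h2
  have e : ∀ x : (Fin k → A) × (Fin k → A) × (Fin k → A),
      (fun i => f (x.1 i) (x.2.1 i) (x.2.2 i))
        = c.psi (c.phi1 x.1 (c.phi31 x.2.2)) (c.phi2 x.2.1 (c.phi32 x.2.2)) :=
    fun x => (c.zero_error x.1 x.2.1 x.2.2).symm
  simp only [e]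
  exact congrArg₂ c.psi h1 h2
end

section
/- Let f0 : GF(3)³ → GF(3) be defined by f0(x1, x2, 0) = x1 − x2, f0(x1, x2, 1) = 1 if (x1, x2) = (2, 0) and 0 otherwise, and f0(x1, x2, 2) = 0 if (x1, x2) = (0, 2) and 1 otherwise. For every k ≥ 1 and every a3 ∈ GF(3)^k, letting m := |{i ∈ {1,…,k} : a3^{(i)} ≠ 0}|, the base-2 entropy of the distribution assigning each equivalence class C of ≡^{a3}|_1 on GF(3)^k the probability |C|/3^k satisfies ∑_{C} (|C|/3^k)·log₂(3^k/|C|) = k·log₂ 3 − 2m/3. -/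
open Classical

/-- The example demand function `f0 : GF(3)³ → GF(3)` of Table I:
`f0(x1, x2, 0) = x1 - x2`; `f0(x1, x2, 1) = 1` iff `(x1, x2) = (2, 0)` else `0`;
`f0(x1, x2, 2) = 0` iff `(x1, x2) = (0, 2)` else `1`. -/
def f0 (x1 x2 x3 : ZMod 3) : ZMod 3 :=
  if x3 = 0 then x1 - x2
  else if x3 = 1 then (if x1 = 2 ∧ x2 = 0 then 1 else 0)
  else (if x1 = 0 ∧ x2 = 2 then 0 else 1)

/-! The classes of `≡^{a3}|₁` on `A^k` are products of the classes of the coordinate relations,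
so the entropy of the class distribution splits over coordinates: averaging
`log (|A|^k / |[x]|)` over `x` gives `k log |A| - (1/|A|) ∑ᵢ log ∏ₜ |[t]_{a3 i}|`.
For `f0` every class is a singleton when `a = 0`, while for `a ≠ 0` the classes are `{0, 1}, {2}`
(`a = 1`) or `{0}, {1, 2}` (`a = 2`), so `∏ₜ |[t]| = 2 · 2 · 1 = 4` and each nonzero coordinate
costs `log₂ 4 / 3 = 2/3`. -/

open Finset Real

theorem sum_image_card_fiber_mul_logb {Ω S : Type*} [Fintype Ω] [DecidableEq S] (W : Ω → S)
    (c : ℝ) :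
    ∑ s ∈ univ.image W, (#{ω | W ω = s} / c) * logb 2 (c / #{ω | W ω = s})
      = (∑ ω, logb 2 (c / #{ω' | W ω' = W ω})) / c := by
  rw [sum_div, sum_comp (fun s => logb 2 (c / #{ω' | W ω' = s}) / c) W]
  refine sum_congr rfl fun s _ => ?_
  rw [nsmul_eq_mul]
  ring

theorem card_mul_sum_apply {ι A M : Type*} [Fintype ι] [DecidableEq ι] [Fintype A]
    [CommSemiring M] (g : A → M) (i : ι) :
    Fintype.card A * ∑ x : ι → A, g (x i) = Fintype.card A ^ Fintype.card ι * ∑ t, g t := by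
  have hfiber (t : A) : #{x : ι → A | x i = t} = Fintype.card A ^ (Fintype.card ι - 1) := by
    simpa using Fintype.card_filter_piFinset_const_eq_of_mem (univ : Finset A) i (mem_univ t)
  rw [sum_comp g (fun x : ι → A => x i), image_univ_of_surjective fun t => ⟨fun _ => t, rfl⟩]
  simp only [hfiber, nsmul_eq_mul, ← mul_sum, ← mul_assoc]
  push_cast
  rw [← pow_succ', Nat.sub_add_cancel (Fintype.card_pos_iff.2 ⟨i⟩)]

section Eqv1k

variable {A B : Type*} [Fintype A] (f : A → A → A → B)

theorem card_class_eqv1kSetoid {k : ℕ} (a3 x : Fin k → A) :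
    #{y | Quotient.mk (eqv1kSetoid f a3) y = Quotient.mk (eqv1kSetoid f a3) x}
      = ∏ i, #{t | eqv1 f (a3 i) t (x i)} := by
  rw [← Fintype.card_piFinset]
  congr 1
  ext y
  simp only [mem_filter, mem_univ, true_and, Fintype.mem_piFinset, Quotient.eq]
  rfl

theorem card_class_eqv1_pos (a x : A) : 0 < #{t | eqv1 f a t x} :=
  card_pos.2 ⟨x, mem_filter.2 ⟨mem_univ x, fun _ => rfl⟩⟩

theorem logb_card_class_eqv1kSetoid {k : ℕ} (a3 x : Fin k → A) :
    logb 2 #{y | Quotient.mk (eqv1kSetoid f a3) y = Quotient.mk (eqv1kSetoid f a3) x}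
      = ∑ i, logb 2 #{t | eqv1 f (a3 i) t (x i)} := by
  rw [card_class_eqv1kSetoid, Nat.cast_prod,
    logb_prod _ _ fun i _ => Nat.cast_ne_zero.2 (card_class_eqv1_pos f _ _).ne']

theorem sum_logb_div_card_class_eqv1kSetoid [Nonempty A] {k : ℕ} (a3 : Fin k → A) :
    (∑ x, logb 2 ((Fintype.card A : ℝ) ^ k / #{y | Quotient.mk (eqv1kSetoid f a3) y =
        Quotient.mk (eqv1kSetoid f a3) x})) / (Fintype.card A : ℝ) ^ k
      = k * logb 2 (Fintype.card A)
        - logb 2 (∏ i, ∏ t, #{s | eqv1 f (a3 i) s t} : ℕ) / Fintype.card A := by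
  set N : ℝ := (Fintype.card A : ℝ) with hN_def
  have hN : N ≠ 0 := Nat.cast_ne_zero.2 Fintype.card_ne_zero
  have hclass (i : Fin k) (t : A) : ((#{s | eqv1 f (a3 i) s t} : ℕ) : ℝ) ≠ 0 :=
    Nat.cast_ne_zero.2 (card_class_eqv1_pos f _ _).ne'
  have hlog (x : Fin k → A) :
      logb 2 (N ^ k / #{y | Quotient.mk (eqv1kSetoid f a3) y =
        Quotient.mk (eqv1kSetoid f a3) x})
        = k * logb 2 N - ∑ i, logb 2 #{s | eqv1 f (a3 i) s (x i)} := by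
    rw [logb_div (pow_ne_zero _ hN) (Nat.cast_ne_zero.2 (card_pos.2 ⟨x, by simp⟩).ne'),
      logb_pow, logb_card_class_eqv1kSetoid]
  have hcoord (i : Fin k) : N * ∑ x : Fin k → A, logb 2 #{s | eqv1 f (a3 i) s (x i)}
      = N ^ k * logb 2 (∏ t, #{s | eqv1 f (a3 i) s t} : ℕ) := by
    rw [card_mul_sum_apply (fun t => logb 2 #{s | eqv1 f (a3 i) s t}) i, Fintype.card_fin,
      Nat.cast_prod, logb_prod _ _ fun t _ => hclass i t]
  have hsum : N * ∑ i, ∑ x : Fin k → A, logb 2 #{s | eqv1 f (a3 i) s (x i)}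
      = N ^ k * ∑ i, logb 2 (∏ t, #{s | eqv1 f (a3 i) s t} : ℕ) := by
    simp only [mul_sum, hcoord]
  simp only [hlog, sum_sub_distrib, sum_const, card_univ, nsmul_eq_mul, Fintype.card_fun,
    Fintype.card_fin]
  rw [sum_comm, Nat.cast_pow, ← hN_def, Nat.cast_prod, logb_prod _ _ fun i _ =>
    Nat.cast_ne_zero.2 (prod_ne_zero_iff.2 fun t _ => (card_class_eqv1_pos f _ _).ne')]
  field_simp
  linear_combination -hsum

end Eqv1k

theorem prod_card_class_eqv1_f0 (a : ZMod 3) :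
    ∏ t, #{s | eqv1 f0 a s t} = if a = 0 then 1 else 4 := by
  -- `eqv1` is decided classically, so `decide` runs on the unfolded predicate instead.
  rw [← (by decide : ∀ a : ZMod 3,
    ∏ t, #{s | ∀ x2, f0 s x2 a = f0 t x2 a} = if a = 0 then 1 else 4) a]
  congr!

theorem prod_prod_card_class_eqv1_f0 {k : ℕ} (a3 : Fin k → ZMod 3) :
    ∏ i, ∏ t, #{s | eqv1 f0 (a3 i) s t} = 4 ^ #{i | a3 i ≠ 0} := by
  simp only [prod_card_class_eqv1_f0, prod_ite, prod_const_one, prod_const, one_mul]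

theorem stmt_13_general {k : ℕ} (a3 : Fin k → ZMod 3) :
    ∑ q ∈ Finset.univ.image (Quotient.mk (eqv1kSetoid f0 a3)),
      (((Finset.univ.filter fun x : Fin k → ZMod 3 =>
          Quotient.mk (eqv1kSetoid f0 a3) x = q).card : ℝ) / 3 ^ k) *
        Real.logb 2 ((3 : ℝ) ^ k /
          ((Finset.univ.filter fun x : Fin k → ZMod 3 =>
            Quotient.mk (eqv1kSetoid f0 a3) x = q).card : ℝ)) =
      k * Real.logb 2 3 - 2 * ((Finset.univ.filter fun i => a3 i ≠ 0).card : ℝ) / 3 := by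
  have hcard : ((Fintype.card (ZMod 3) : ℕ) : ℝ) = 3 := by simp
  have hlogb4 : logb 2 (4 : ℝ) = 2 := by
    rw [show (4 : ℝ) = 2 ^ 2 by norm_num, logb_pow, logb_self_eq_one one_lt_two]
    norm_num
  rw [sum_image_card_fiber_mul_logb, ← hcard, sum_logb_div_card_class_eqv1kSetoid, hcard,
    prod_prod_card_class_eqv1_f0, Nat.cast_pow, logb_pow, Nat.cast_ofNat, hlogb4]
  ring

/-- The base-2 entropy of the `≡^{a3}|₁` equivalence-class-size distribution
on `GF(3)^k` equals `k·log₂ 3 − 2m/3`, where `m` is the number of nonzero components of `a3`. -/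
theorem stmt_13 {k : ℕ} (hk : 1 ≤ k) (a3 : Fin k → ZMod 3) :
    ∑ q ∈ Finset.univ.image (Quotient.mk (eqv1kSetoid f0 a3)),
      (((Finset.univ.filter fun x : Fin k → ZMod 3 =>
          Quotient.mk (eqv1kSetoid f0 a3) x = q).card : ℝ) / 3 ^ k) *
        Real.logb 2 ((3 : ℝ) ^ k /
          ((Finset.univ.filter fun x : Fin k → ZMod 3 =>
            Quotient.mk (eqv1kSetoid f0 a3) x = q).card : ℝ)) =
      k * Real.logb 2 3 - 2 * ((Finset.univ.filter fun i => a3 i ≠ 0).card : ℝ) / 3 :=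
  stmt_13_general a3
end

section
/- Let f0 : GF(3)³ → GF(3) be defined by f0(x1, x2, 0) = x1 − x2, f0(x1, x2, 1) = 1 if (x1, x2) = (2, 0) and 0 otherwise, and f0(x1, x2, 2) = 0 if (x1, x2) = (0, 2) and 1 otherwise. For any zero-error code for f0 with block length k, with (X1, X2, X3) uniformly distributed on (GF(3)^k)³ and Z1 := φ1(X1, φ31(X3)), one has H(Z1 | X3) ≥ k·(log₂ 3 − 4/9). -/
open Classical

lemma card_filter_pi {k : ℕ} {A : Type*} [Fintype A] [DecidableEq A]
    (p : Fin k → A → Prop) [∀ i, DecidablePred (p i)] :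
    (Finset.univ.filter fun y : Fin k → A => ∀ i, p i (y i)).card
      = ∏ i, (Finset.univ.filter (p i)).card := by
  have h : (Finset.univ.filter fun y : Fin k → A => ∀ i, p i (y i))
      = Fintype.piFinset (fun i => Finset.univ.filter (p i)) := by
    ext y; simp [Fintype.mem_piFinset]
  rw [h, Fintype.card_piFinset]

lemma sum_eval {k : ℕ} {A : Type*} [Fintype A] [DecidableEq A]
    (h : A → ℝ) (i : Fin k) :
    ∑ x : Fin k → A, h (x i) = (Fintype.card A : ℝ) ^ (k - 1) * ∑ a, h a := by
  rw [Finset.sum_comp h (fun x : Fin k → A => x i)]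
  rw [Finset.image_univ_of_surjective (fun a => ⟨fun _ => a, rfl⟩)]
  have hcard : ∀ a : A, (Finset.univ.filter fun x : Fin k → A => x i = a).card
      = Fintype.card A ^ (k - 1) := by
    intro a
    have h1 : (Finset.univ.filter fun x : Fin k → A => x i = a)
        = Finset.univ.filter fun x : Fin k → A => ∀ j, j = i → x j = a := by
      apply Finset.filter_congr
      intro x _
      constructor
      · intro hx j hj; subst hj; exact hx
      · intro hx; exact hx i rfl
    rw [h1, card_filter_pi (fun j b => j = i → b = a)]
    have h2 : ∀ j : Fin k, (Finset.univ.filter fun b : A => j = i → b = a).card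
        = if j = i then 1 else Fintype.card A := by
      intro j
      by_cases hj : j = i
      · subst hj
        have e1 : (Finset.univ.filter fun b : A => j = j → b = a)
            = Finset.univ.filter (fun b => b = a) :=
          Finset.filter_congr (fun b _ => by simp)
        rw [if_pos rfl, e1, Finset.filter_eq']
        simp
      · have e2 : (Finset.univ.filter fun b : A => j = i → b = a)
            = Finset.univ.filter (fun _ => True) :=
          Finset.filter_congr (fun b _ => by simp [hj])
        rw [if_neg hj, e2, Finset.filter_true, Finset.card_univ]
    calc ∏ j, (Finset.univ.filter fun b : A => j = i → b = a).card
        = ∏ j, (if j = i then 1 else Fintype.card A) := by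
          exact Finset.prod_congr rfl (fun j _ => h2 j)
      _ = Fintype.card A ^ (k - 1) := by
          rw [← Finset.mul_prod_erase Finset.univ _ (Finset.mem_univ i), if_pos rfl,
            Finset.prod_congr rfl (fun j hj => if_neg (Finset.ne_of_mem_erase hj)),
            Finset.prod_const, Finset.card_erase_of_mem (Finset.mem_univ i),
            Finset.card_univ, Fintype.card_fin, one_mul]
  calc ∑ a : A, (Finset.univ.filter fun x : Fin k → A => x i = a).card • h a
      = ∑ a : A, (Fintype.card A : ℝ) ^ (k - 1) * h a := by
        apply Finset.sum_congr rfl; intro a _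
        rw [hcard a, nsmul_eq_mul]; push_cast; ring
    _ = (Fintype.card A : ℝ) ^ (k - 1) * ∑ a, h a := by rw [Finset.mul_sum]

def nsz (a3 a : ZMod 3) : ℕ :=
  (Finset.univ.filter fun y : ZMod 3 => ∀ x2, f0 a x2 a3 = f0 y x2 a3).card

lemma nsz_pos : ∀ a3 a : ZMod 3, 0 < nsz a3 a := by decide

noncomputable def gg (a3 a : ZMod 3) : ℝ := Real.logb 2 (3 / (nsz a3 a : ℝ))

lemma zmod3_sum (hfun : ZMod 3 → ℝ) : ∑ a, hfun a = hfun 0 + hfun 1 + hfun 2 := by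
  have huniv : (Finset.univ : Finset (ZMod 3)) = {0, 1, 2} := by decide
  rw [huniv, show ({0,1,2} : Finset (ZMod 3)) = insert 0 (insert 1 {2}) from rfl,
    Finset.sum_insert (by decide), Finset.sum_insert (by decide), Finset.sum_singleton]
  ring

lemma sum_gg : ∑ a3 : ZMod 3, ∑ a : ZMod 3, gg a3 a = 9 * Real.logb 2 3 - 4 := by
  have hval : ∀ a3 a : ZMod 3, nsz a3 a =
      if a3 = 0 ∨ (a3 = 1 ∧ a = 2) ∨ (a3 = 2 ∧ a = 0) then 1 else 2 := by decide
  have h32 : Real.logb 2 ((3:ℝ)/2) = Real.logb 2 3 - 1 := by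
    rw [Real.logb_div (by norm_num) (by norm_num), Real.logb_self_eq_one (by norm_num)]
  rw [zmod3_sum, zmod3_sum, zmod3_sum, zmod3_sum]
  simp only [gg, show nsz 0 0 = 1 from by decide, show nsz 0 1 = 1 from by decide,
    show nsz 0 2 = 1 from by decide, show nsz 1 0 = 2 from by decide,
    show nsz 1 1 = 2 from by decide, show nsz 1 2 = 1 from by decide,
    show nsz 2 0 = 1 from by decide, show nsz 2 1 = 2 from by decide,
    show nsz 2 2 = 2 from by decide, Nat.cast_one, Nat.cast_ofNat, div_one]
  rw [h32]
  ring


lemma uCondH_proj {P Q R S : Type*} [Fintype P] [Fintype Q] [Fintype R]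
    [Nonempty P] [Nonempty Q] (F : P → R → S) :
    uCondH (fun ω : P × Q × R => F ω.1 ω.2.2) (fun ω : P × Q × R => ω.2.2)
    = ∑ v : R, ∑ x1 : P,
        ((Fintype.card Q : ℝ) / (Fintype.card (P × Q × R) : ℝ)) *
          Real.logb 2 ((Fintype.card P : ℝ) / (Nat.card {y : P // F y v = F x1 v} : ℝ)) := by
  classical
  rw [uCondH]
  rw [Finset.sum_subset (Finset.subset_univ _)
    (fun v _ hv => False.elim (hv (Finset.mem_image.mpr
      ⟨(Classical.arbitrary P, Classical.arbitrary Q, v), Finset.mem_univ _, rfl⟩)))]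
  apply Finset.sum_congr rfl
  intro v _
  have hQ0 : (Fintype.card Q : ℝ) ≠ 0 := by
    have := Fintype.card_pos (α := Q)
    positivity
  have hcount1 : ∀ s : S,
      (Finset.filter (fun ω : P × Q × R => F ω.1 ω.2.2 = s ∧ ω.2.2 = v) Finset.univ).card
      = (Finset.filter (fun y : P => F y v = s) Finset.univ).card * Fintype.card Q := by
    intro s
    have e : (Finset.filter (fun ω : P × Q × R => F ω.1 ω.2.2 = s ∧ ω.2.2 = v) Finset.univ)
        = (Finset.filter (fun y : P => F y v = s) Finset.univ)
          ×ˢ ((Finset.univ : Finset Q) ×ˢ ({v} : Finset R)) := by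
      ext ⟨y1, y2, y3⟩
      simp only [Finset.mem_filter, Finset.mem_univ, true_and, Finset.mem_product,
        Finset.mem_singleton]
      constructor
      · rintro ⟨h1, rfl⟩; exact ⟨h1, rfl⟩
      · rintro ⟨h1, rfl⟩; exact ⟨h1, rfl⟩
    rw [e, Finset.card_product, Finset.card_product, Finset.card_singleton,
      Finset.card_univ]
    ring
  have hcount2 :
      (Finset.filter (fun ω : P × Q × R => ω.2.2 = v) Finset.univ).card
      = Fintype.card P * Fintype.card Q := by
    have e : (Finset.filter (fun ω : P × Q × R => ω.2.2 = v) Finset.univ)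
        = (Finset.univ : Finset P) ×ˢ ((Finset.univ : Finset Q) ×ˢ ({v} : Finset R)) := by
      ext ⟨y1, y2, y3⟩
      simp [Finset.mem_product, eq_comm]
    rw [e, Finset.card_product, Finset.card_product, Finset.card_singleton,
      Finset.card_univ, Finset.card_univ]
    ring
  have hnat : ∀ x1 : P, ((Finset.filter (fun y : P => F y v = F x1 v) Finset.univ).card : ℕ)
      = Nat.card {y : P // F y v = F x1 v} := by
    intro x1
    rw [Nat.card_eq_fintype_card, Fintype.card_subtype]
  calc ∑ s ∈ Finset.image (fun ω : P × Q × R => F ω.1 ω.2.2) Finset.univ,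
        (((Finset.filter (fun ω : P × Q × R => F ω.1 ω.2.2 = s ∧ ω.2.2 = v)
            Finset.univ).card : ℝ) / (Fintype.card (P × Q × R) : ℝ)) *
          Real.logb 2
            (((Finset.filter (fun ω : P × Q × R => ω.2.2 = v) Finset.univ).card : ℝ) /
              ((Finset.filter (fun ω : P × Q × R => F ω.1 ω.2.2 = s ∧ ω.2.2 = v)
                Finset.univ).card : ℝ))
      = ∑ s ∈ Finset.image (fun ω : P × Q × R => F ω.1 ω.2.2) Finset.univ,
          (Finset.filter (fun y : P => F y v = s) Finset.univ).card •
            (((Fintype.card Q : ℝ) / (Fintype.card (P × Q × R) : ℝ)) *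
              Real.logb 2 ((Fintype.card P : ℝ) /
                ((Finset.filter (fun y : P => F y v = s) Finset.univ).card : ℝ))) := by
        apply Finset.sum_congr rfl
        intro s _
        rw [hcount1 s, hcount2, nsmul_eq_mul]
        push_cast
        rw [mul_div_mul_right _ _ hQ0]
        ring
    _ = ∑ s ∈ Finset.image (fun y : P => F y v) Finset.univ,
          (Finset.filter (fun y : P => F y v = s) Finset.univ).card •
            (((Fintype.card Q : ℝ) / (Fintype.card (P × Q × R) : ℝ)) *
              Real.logb 2 ((Fintype.card P : ℝ) /
                ((Finset.filter (fun y : P => F y v = s) Finset.univ).card : ℝ))) := by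
        refine (Finset.sum_subset ?_ ?_).symm
        · intro s hs
          obtain ⟨y, -, rfl⟩ := Finset.mem_image.mp hs
          exact Finset.mem_image.mpr ⟨(y, Classical.arbitrary Q, v), Finset.mem_univ _, rfl⟩
        · intro s _ hs
          have h0 : (Finset.filter (fun y : P => F y v = s) Finset.univ).card = 0 :=
            Finset.card_eq_zero.mpr (Finset.filter_eq_empty_iff.mpr
              (fun y _ he => hs (Finset.mem_image.mpr ⟨y, Finset.mem_univ _, he⟩)))
          rw [h0, zero_smul]
    _ = ∑ x1 : P, (((Fintype.card Q : ℝ) / (Fintype.card (P × Q × R) : ℝ)) *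
            Real.logb 2 ((Fintype.card P : ℝ) /
              ((Finset.filter (fun y : P => F y v = F x1 v) Finset.univ).card : ℝ))) :=
        (Finset.sum_comp (fun s : S => ((Fintype.card Q : ℝ) / (Fintype.card (P × Q × R) : ℝ)) *
          Real.logb 2 ((Fintype.card P : ℝ) /
            ((Finset.filter (fun y : P => F y v = s) Finset.univ).card : ℝ)))
          (fun y : P => F y v)).symm
    _ = ∑ x1 : P, (((Fintype.card Q : ℝ) / (Fintype.card (P × Q × R) : ℝ)) *
            Real.logb 2 ((Fintype.card P : ℝ) /
              (Nat.card {y : P // F y v = F x1 v} : ℝ))) := by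
        apply Finset.sum_congr rfl
        intro x1 _
        rw [hnat x1]

/-- For any zero-error code for `f0`, with `(X1, X2, X3)` uniform on
`(GF(3)^k)³` and `Z1 := φ1(X1, φ31(X3))`, one has `H(Z1 | X3) ≥ k·(log₂ 3 − 4/9)`. -/
theorem stmt_14 {Z : Type*} [Fintype Z] (hZ : 1 < Fintype.card Z)
    {k : ℕ} (hk : 1 ≤ k) (c : ZECode (ZMod 3) (ZMod 3) Z k f0) :
    uCondH
        (fun ω : (Fin k → ZMod 3) × (Fin k → ZMod 3) × (Fin k → ZMod 3) =>
          c.phi1 ω.1 (c.phi31 ω.2.2))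
        (fun ω : (Fin k → ZMod 3) × (Fin k → ZMod 3) × (Fin k → ZMod 3) => ω.2.2) ≥
      k * (Real.logb 2 3 - 4 / 9) := by
  classical
  have hP : Fintype.card (Fin k → ZMod 3) = 3 ^ k := by
    simp [Fintype.card_fun]
  have hOm : Fintype.card ((Fin k → ZMod 3) × (Fin k → ZMod 3) × (Fin k → ZMod 3))
      = 3 ^ k * (3 ^ k * 3 ^ k) := by
    simp [Fintype.card_prod, hP]
  have h3k0 : ((3:ℝ)) ^ k ≠ 0 := by positivity
  have h9eq : (9:ℝ) ^ k = 3 ^ k * 3 ^ k := by rw [← mul_pow]; norm_num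
  have hcoef : ((Fintype.card (Fin k → ZMod 3) : ℝ) /
      (Fintype.card ((Fin k → ZMod 3) × (Fin k → ZMod 3) × (Fin k → ZMod 3)) : ℝ))
      = 1 / (9:ℝ) ^ k := by
    rw [hP, hOm]
    push_cast
    rw [h9eq]
    field_simp
  have hcard3 : ((Fintype.card (ZMod 3) : ℝ)) = 3 := by simp
  rw [ge_iff_le, uCondH_proj (fun x1 v => c.phi1 x1 (c.phi31 v))]
  -- pointwise lower bound
  have hpt : ∀ v x1 : Fin k → ZMod 3,
      (1 / (9:ℝ) ^ k) * ∑ i, gg (v i) (x1 i) ≤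
      ((Fintype.card (Fin k → ZMod 3) : ℝ) /
          (Fintype.card ((Fin k → ZMod 3) × (Fin k → ZMod 3) × (Fin k → ZMod 3)) : ℝ)) *
        Real.logb 2 ((Fintype.card (Fin k → ZMod 3) : ℝ) /
          (Nat.card {y : Fin k → ZMod 3 //
            c.phi1 y (c.phi31 v) = c.phi1 x1 (c.phi31 v)} : ℝ)) := by
    intro v x1
    rw [hcoef, hP]
    have h9pos : (0:ℝ) < 1 / (9:ℝ) ^ k := by positivity
    refine mul_le_mul_of_nonneg_left ?_ h9pos.le
    haveI hne : Nonempty {y : Fin k → ZMod 3 //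
        c.phi1 y (c.phi31 v) = c.phi1 x1 (c.phi31 v)} := ⟨⟨x1, rfl⟩⟩
    have hfib1 : 0 < Nat.card {y : Fin k → ZMod 3 //
        c.phi1 y (c.phi31 v) = c.phi1 x1 (c.phi31 v)} := Nat.card_pos
    have hNpos : 0 < ∏ i, nsz (v i) (x1 i) :=
      Finset.prod_pos fun i _ => nsz_pos _ _
    have hstep : ∀ y : Fin k → ZMod 3, c.phi1 y (c.phi31 v) = c.phi1 x1 (c.phi31 v) →
        ∀ i, ∀ a2 : ZMod 3, f0 (x1 i) a2 (v i) = f0 (y i) a2 (v i) := by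
      intro y he i a2
      have h1 := c.zero_error x1 (fun _ => a2) v
      have h2 := c.zero_error y (fun _ => a2) v
      rw [he] at h2
      rw [h2] at h1
      exact (congrFun h1 i).symm
    have hfibN : Nat.card {y : Fin k → ZMod 3 //
        c.phi1 y (c.phi31 v) = c.phi1 x1 (c.phi31 v)} ≤ ∏ i, nsz (v i) (x1 i) := by
      calc Nat.card {y : Fin k → ZMod 3 //
            c.phi1 y (c.phi31 v) = c.phi1 x1 (c.phi31 v)}
          ≤ Nat.card {y : Fin k → ZMod 3 //
              ∀ i, ∀ a2 : ZMod 3, f0 (x1 i) a2 (v i) = f0 (y i) a2 (v i)} :=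
            Nat.card_le_card_of_injective
              (fun y => ⟨y.1, hstep y.1 y.2⟩)
              (by intro a b h; apply Subtype.ext; simpa using congrArg Subtype.val h)
        _ = (Finset.univ.filter fun y : Fin k → ZMod 3 =>
              ∀ i, ∀ a2 : ZMod 3, f0 (x1 i) a2 (v i) = f0 (y i) a2 (v i)).card := by
            rw [Nat.card_eq_fintype_card, Fintype.card_subtype]
        _ = ∏ i, nsz (v i) (x1 i) := by
            rw [card_filter_pi (fun i b => ∀ a2 : ZMod 3, f0 (x1 i) a2 (v i) = f0 b a2 (v i))]
            exact Finset.prod_congr rfl fun i _ => rfl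
    have harg : (((3:ℕ) ^ k : ℕ) : ℝ) / ((∏ i, nsz (v i) (x1 i) : ℕ) : ℝ)
        = ∏ i, ((3:ℝ) / (nsz (v i) (x1 i) : ℝ)) := by
      rw [Finset.prod_div_distrib, Finset.prod_const, Finset.card_univ, Fintype.card_fin]
      push_cast
      try ring
    calc ∑ i, gg (v i) (x1 i)
        = Real.logb 2 ((((3:ℕ) ^ k : ℕ) : ℝ) / ((∏ i, nsz (v i) (x1 i) : ℕ) : ℝ)) := by
          rw [harg, Real.logb_prod]
          · rfl
          · intro i _
            have := nsz_pos (v i) (x1 i)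
            positivity
      _ ≤ Real.logb 2 ((((3:ℕ) ^ k : ℕ) : ℝ) /
            (Nat.card {y : Fin k → ZMod 3 //
              c.phi1 y (c.phi31 v) = c.phi1 x1 (c.phi31 v)} : ℝ)) := by
          apply Real.logb_le_logb_of_le (by norm_num)
          · apply div_pos
            · positivity
            · exact_mod_cast hNpos
          · gcongr

  refine le_trans (le_of_eq ?_) (Finset.sum_le_sum fun v _ =>
    Finset.sum_le_sum fun x1 _ => hpt v x1)
  -- evaluate the double sum
  have e1 : ∀ v : Fin k → ZMod 3,
      ∑ x1 : Fin k → ZMod 3, (1 / (9:ℝ) ^ k) * ∑ i, gg (v i) (x1 i)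
      = (1 / (9:ℝ) ^ k) * ((3:ℝ) ^ (k - 1) * ∑ i : Fin k, ∑ a : ZMod 3, gg (v i) a) := by
    intro v
    rw [← Finset.mul_sum]
    congr 1
    calc ∑ x1 : Fin k → ZMod 3, ∑ i, gg (v i) (x1 i)
        = ∑ i : Fin k, ∑ x1 : Fin k → ZMod 3, gg (v i) (x1 i) := Finset.sum_comm
      _ = ∑ i : Fin k, ((3:ℝ) ^ (k - 1) * ∑ a : ZMod 3, gg (v i) a) :=
          Finset.sum_congr rfl (fun i _ => by
            rw [← hcard3]; exact sum_eval (fun a => gg (v i) a) i)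
      _ = (3:ℝ) ^ (k - 1) * ∑ i : Fin k, ∑ a : ZMod 3, gg (v i) a :=
          (Finset.mul_sum _ _ _).symm
  calc ↑k * (Real.logb 2 3 - 4 / 9)
      = (1 / (9:ℝ) ^ k) * ((3:ℝ) ^ (k - 1) *
          (k * ((3:ℝ) ^ (k - 1) * (9 * Real.logb 2 3 - 4)))) := by
        obtain ⟨m, rfl⟩ : ∃ m, k = m + 1 := ⟨k - 1, (Nat.succ_pred_eq_of_pos hk).symm⟩
        simp only [Nat.add_sub_cancel]
        have h33 : (3:ℝ) ^ m * 3 ^ m = 9 ^ m := by rw [← mul_pow]; norm_num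
        have h9s : (9:ℝ) ^ (m + 1) = 9 ^ m * 9 := pow_succ 9 m
        rw [h9s, ← h33]
        have h3m : ((3:ℝ)) ^ m ≠ 0 := by positivity
        push_cast
        field_simp
    _ = ∑ v : Fin k → ZMod 3, (1 / (9:ℝ) ^ k) * ((3:ℝ) ^ (k - 1) *
          ∑ i : Fin k, ∑ a : ZMod 3, gg (v i) a) := by
        have e2 : ∑ v : Fin k → ZMod 3, ((3:ℝ) ^ (k - 1) *
            ∑ i : Fin k, ∑ a : ZMod 3, gg (v i) a)
            = (3:ℝ) ^ (k - 1) * (k * ((3:ℝ) ^ (k - 1) * (9 * Real.logb 2 3 - 4))) := by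
          calc ∑ v : Fin k → ZMod 3, ((3:ℝ) ^ (k - 1) *
                ∑ i : Fin k, ∑ a : ZMod 3, gg (v i) a)
              = (3:ℝ) ^ (k - 1) * ∑ v : Fin k → ZMod 3,
                  ∑ i : Fin k, ∑ a : ZMod 3, gg (v i) a :=
                (Finset.mul_sum _ _ _).symm
            _ = (3:ℝ) ^ (k - 1) * ∑ i : Fin k,
                  ∑ v : Fin k → ZMod 3, ∑ a : ZMod 3, gg (v i) a := by
                rw [Finset.sum_comm]
            _ = (3:ℝ) ^ (k - 1) * ∑ i : Fin k,
                  ((3:ℝ) ^ (k - 1) * ∑ a3 : ZMod 3, ∑ a : ZMod 3, gg a3 a) :=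
                congrArg _ (Finset.sum_congr rfl (fun i _ => by
                  rw [← hcard3]; exact sum_eval (fun a3 => ∑ a : ZMod 3, gg a3 a) i))
            _ = (3:ℝ) ^ (k - 1) * (k * ((3:ℝ) ^ (k - 1) * (9 * Real.logb 2 3 - 4))) := by
                rw [sum_gg, Finset.sum_const, Finset.card_univ, Fintype.card_fin,
                  nsmul_eq_mul]
        rw [← Finset.mul_sum, e2]
    _ = ∑ v : Fin k → ZMod 3, ∑ x1 : Fin k → ZMod 3,
          (1 / (9:ℝ) ^ k) * ∑ i, gg (v i) (x1 i) :=
        (Finset.sum_congr rfl (fun v _ => e1 v)).symm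
end

section
/- Let f⁺ : {0,1}³ → {0,1,2,3} be the arithmetic sum f⁺(x1, x2, x3) = x1 + x2 + x3 over the integers. For any zero-error code for f⁺ with block length k and every a3 ∈ {0,1}^k, the map x1 ↦ φ1(x1, φ31(a3)) is injective on {0,1}^k, and likewise x2 ↦ φ2(x2, φ32(a3)) is injective. Consequently, with (X1, X2, X3) uniformly distributed on ({0,1}^k)³ and Z1 := φ1(X1, φ31(X3)), one has H(Z1 | X3) ≥ k, and similarly H(Z2 | X3) ≥ k for Z2 := φ2(X2, φ32(X3)). -/
open Classical

/-- The arithmetic-sum demand function `f⁺ : {0,1}³ → {0,1,2,3}`,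
`f⁺(x1, x2, x3) = x1 + x2 + x3` over the integers. -/
def fplus (x1 x2 x3 : Fin 2) : Fin 4 :=
  ⟨x1.val + x2.val + x3.val, by
    have h1 := x1.isLt; have h2 := x2.isLt; have h3 := x3.isLt; omega⟩

open Finset in
lemma sum_card_fiber {Ω S : Type*} [Fintype Ω] (W : Ω → S) (P : Ω → Prop) :
    ∑ s ∈ univ.image W, (univ.filter fun ω => W ω = s ∧ P ω).card
      = (univ.filter fun ω => P ω).card := by
  simp only [Finset.card_filter]
  rw [Finset.sum_comm]
  refine Finset.sum_congr rfl fun ω _ => ?_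
  simp only [ite_and]
  rw [Finset.sum_ite_eq]
  simp

open Finset in
lemma uCondH_eq_logb {Ω S T : Type*} [Fintype Ω] [Nonempty Ω] (W : Ω → S) (V : Ω → T)
    (c m : ℕ)
    (hm : ∀ v ∈ univ.image V, (univ.filter fun ω => V ω = v).card = m)
    (hn : ∀ s v, (univ.filter fun ω => W ω = s ∧ V ω = v).card = 0 ∨
      (univ.filter fun ω => W ω = s ∧ V ω = v).card = c) :
    uCondH W V = Real.logb 2 ((m : ℝ) / (c : ℝ)) := by
  have hN : (0:ℝ) < (Fintype.card Ω : ℝ) := by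
    exact_mod_cast Fintype.card_pos
  have htot : ∑ v ∈ univ.image V, (univ.filter fun ω => V ω = v).card = Fintype.card Ω := by
    have h := sum_card_fiber V (fun _ => True)
    simpa using h
  have keyN : ∑ v ∈ univ.image V, ∑ s ∈ univ.image W,
      (univ.filter fun ω => W ω = s ∧ V ω = v).card = Fintype.card Ω := by
    rw [Finset.sum_congr rfl fun v _ => sum_card_fiber W (fun ω => V ω = v)]
    exact htot
  unfold uCondH
  have step : uCondH W V = ∑ v ∈ univ.image V, ∑ s ∈ univ.image W,
      ((univ.filter fun ω => W ω = s ∧ V ω = v).card : ℝ) / (Fintype.card Ω : ℝ) *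
        Real.logb 2 ((m : ℝ) / (c : ℝ)) := by
    unfold uCondH
    refine Finset.sum_congr rfl fun v hv => Finset.sum_congr rfl fun s _ => ?_
    rcases hn s v with h | h
    · simp [h]
    · rw [h, hm v hv]
  rw [show (∑ v ∈ univ.image V, ∑ s ∈ univ.image W,
      ((univ.filter fun ω => W ω = s ∧ V ω = v).card : ℝ) / (Fintype.card Ω : ℝ) *
        Real.logb 2 (((univ.filter fun ω => V ω = v).card : ℝ) /
          ((univ.filter fun ω => W ω = s ∧ V ω = v).card : ℝ))) = uCondH W V from rfl, step]
  simp only [← Finset.sum_mul, ← Finset.sum_div]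
  rw [show (∑ v ∈ univ.image V, ∑ s ∈ univ.image W,
      ((univ.filter fun ω => W ω = s ∧ V ω = v).card : ℝ)) = (Fintype.card Ω : ℝ) by
    exact_mod_cast keyN]
  rw [div_self hN.ne', one_mul]


open Finset in
lemma card_fiber_trd {α β γ : Type*} [Fintype α] [Fintype β] [Fintype γ] (v : γ) :
    (univ.filter fun ω : α × β × γ => ω.2.2 = v).card = Fintype.card α * Fintype.card β := by
  have h : (univ.filter fun ω : α × β × γ => ω.2.2 = v) = univ ×ˢ univ ×ˢ {v} := by
    ext ω
    simp only [Finset.mem_filter, Finset.mem_product, Finset.mem_univ, true_and,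
      Finset.mem_singleton]
  rw [h]
  simp [Finset.card_product]

open Finset in
lemma card_fiber_fst {α β γ S : Type*} [Fintype α] [Fintype β] [Fintype γ]
    (g : α → γ → S) (v : γ) (hg : Function.Injective fun a => g a v) (s : S) :
    (univ.filter fun ω : α × β × γ => g ω.1 ω.2.2 = s ∧ ω.2.2 = v).card = 0 ∨
    (univ.filter fun ω : α × β × γ => g ω.1 ω.2.2 = s ∧ ω.2.2 = v).card = Fintype.card β := by
  by_cases h : ∃ a, g a v = s
  · right
    obtain ⟨a0, ha0⟩ := h
    have h2 : (univ.filter fun ω : α × β × γ => g ω.1 ω.2.2 = s ∧ ω.2.2 = v)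
        = {a0} ×ˢ univ ×ˢ {v} := by
      ext ω
      simp only [Finset.mem_filter, Finset.mem_product, Finset.mem_univ, true_and,
        Finset.mem_singleton]
      constructor
      · rintro ⟨hs, hv⟩
        refine ⟨hg ?_, hv⟩
        simp only []
        rw [← hv] at ha0 ⊢
        exact hs.trans ha0.symm
      · rintro ⟨h1, h2⟩
        subst h1; subst h2
        exact ⟨ha0, rfl⟩
    rw [h2]; simp
  · left
    rw [Finset.card_eq_zero, Finset.filter_eq_empty_iff]
    rintro ω - ⟨hs, hv⟩
    exact h ⟨ω.1, hv ▸ hs⟩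

open Finset in
lemma card_fiber_snd {α β γ S : Type*} [Fintype α] [Fintype β] [Fintype γ]
    (g : β → γ → S) (v : γ) (hg : Function.Injective fun b => g b v) (s : S) :
    (univ.filter fun ω : α × β × γ => g ω.2.1 ω.2.2 = s ∧ ω.2.2 = v).card = 0 ∨
    (univ.filter fun ω : α × β × γ => g ω.2.1 ω.2.2 = s ∧ ω.2.2 = v).card = Fintype.card α := by
  by_cases h : ∃ b, g b v = s
  · right
    obtain ⟨b0, hb0⟩ := h
    have h2 : (univ.filter fun ω : α × β × γ => g ω.2.1 ω.2.2 = s ∧ ω.2.2 = v)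
        = univ ×ˢ {b0} ×ˢ {v} := by
      ext ω
      simp only [Finset.mem_filter, Finset.mem_product, Finset.mem_univ, true_and,
        Finset.mem_singleton]
      constructor
      · rintro ⟨hs, hv⟩
        refine ⟨hg ?_, hv⟩
        simp only []
        rw [← hv] at hb0 ⊢
        exact hs.trans hb0.symm
      · rintro ⟨h1, h2⟩
        rcases ω with ⟨a, b, c⟩
        simp only at h1 h2
        subst h1; subst h2
        exact ⟨hb0, rfl⟩
    rw [h2]; simp
  · left
    rw [Finset.card_eq_zero, Finset.filter_eq_empty_iff]
    rintro ω - ⟨hs, hv⟩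
    exact h ⟨ω.2.1, hv ▸ hs⟩


lemma inj1_aux {Z : Type*} {k : ℕ} (c : ZECode (Fin 2) (Fin 4) Z k fplus) (a3 : Fin k → Fin 2) :
    Function.Injective (fun x1 : Fin k → Fin 2 => c.phi1 x1 (c.phi31 a3)) := by
  intro x y h
  simp only at h
  have h1 := c.zero_error x (fun _ => 0) a3
  have h2 := c.zero_error y (fun _ => 0) a3
  rw [h, h2] at h1
  funext i
  have hi := congrFun h1 i
  simp only [fplus, Fin.mk.injEq] at hi
  exact Fin.ext (by omega)

lemma inj2_aux {Z : Type*} {k : ℕ} (c : ZECode (Fin 2) (Fin 4) Z k fplus) (a3 : Fin k → Fin 2) :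
    Function.Injective (fun x2 : Fin k → Fin 2 => c.phi2 x2 (c.phi32 a3)) := by
  intro x y h
  simp only at h
  have h1 := c.zero_error (fun _ => 0) x a3
  have h2 := c.zero_error (fun _ => 0) y a3
  rw [h, h2] at h1
  funext i
  have hi := congrFun h1 i
  simp only [fplus, Fin.mk.injEq] at hi
  exact Fin.ext (by omega)

/-- For any zero-error code for the arithmetic sum `f⁺`, the encoders
`x1 ↦ φ1(x1, φ31(a3))` and `x2 ↦ φ2(x2, φ32(a3))` are injective for every `a3`;
consequently `H(Z1 | X3) ≥ k` and `H(Z2 | X3) ≥ k`. -/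
theorem stmt_16 {Z : Type*} [Fintype Z] (hZ : 1 < Fintype.card Z)
    {k : ℕ} (hk : 1 ≤ k) (c : ZECode (Fin 2) (Fin 4) Z k fplus) :
    (∀ a3 : Fin k → Fin 2,
      Function.Injective (fun x1 : Fin k → Fin 2 => c.phi1 x1 (c.phi31 a3))) ∧
    (∀ a3 : Fin k → Fin 2,
      Function.Injective (fun x2 : Fin k → Fin 2 => c.phi2 x2 (c.phi32 a3))) ∧
    uCondH
        (fun ω : (Fin k → Fin 2) × (Fin k → Fin 2) × (Fin k → Fin 2) =>
          c.phi1 ω.1 (c.phi31 ω.2.2))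
        (fun ω : (Fin k → Fin 2) × (Fin k → Fin 2) × (Fin k → Fin 2) => ω.2.2) ≥ k ∧
    uCondH
        (fun ω : (Fin k → Fin 2) × (Fin k → Fin 2) × (Fin k → Fin 2) =>
          c.phi2 ω.2.1 (c.phi32 ω.2.2))
        (fun ω : (Fin k → Fin 2) × (Fin k → Fin 2) × (Fin k → Fin 2) => ω.2.2) ≥ k := by
  have hcard : Fintype.card (Fin k → Fin 2) = 2 ^ k := by simp
  have hinj1 : ∀ a3 : Fin k → Fin 2,
      Function.Injective (fun x1 : Fin k → Fin 2 => c.phi1 x1 (c.phi31 a3)) :=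
    fun a3 => inj1_aux c a3
  have hinj2 : ∀ a3 : Fin k → Fin 2,
      Function.Injective (fun x2 : Fin k → Fin 2 => c.phi2 x2 (c.phi32 a3)) :=
    fun a3 => inj2_aux c a3
  have hval : Real.logb 2 (((2 ^ k * 2 ^ k : ℕ) : ℝ) / ((2 ^ k : ℕ) : ℝ)) = k := by
    push_cast
    rw [mul_div_assoc, div_self (by positivity), mul_one, Real.logb_pow]
    simp [Real.logb_self_eq_one]
  refine ⟨hinj1, hinj2, ?_, ?_⟩
  · rw [uCondH_eq_logb _ _ (2 ^ k) (2 ^ k * 2 ^ k)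
      (fun v _ => by rw [card_fiber_trd v, hcard])
      (fun s v => by
        have := card_fiber_fst (β := Fin k → Fin 2)
          (g := fun a v => c.phi1 a (c.phi31 v)) v (hinj1 v) s
        rwa [hcard] at this), hval]
  · rw [uCondH_eq_logb _ _ (2 ^ k) (2 ^ k * 2 ^ k)
      (fun v _ => by rw [card_fiber_trd v, hcard])
      (fun s v => by
        have := card_fiber_snd (α := Fin k → Fin 2)
          (g := fun b v => c.phi2 b (c.phi32 v)) v (hinj2 v) s
        rwa [hcard] at this), hval]
end

section
/- Let f⊕ : GF(2)³ → GF(2) be the finite-field sum f⊕(x1, x2, x3) = x1 + x2 + x3 over GF(2). For any zero-error code for f⊕ with block length k and every a3 ∈ GF(2)^k, the map (x1, x2) ↦ (φ1(x1, φ31(a3)), φ2(x2, φ32(a3))) is injective on GF(2)^k × GF(2)^k. Consequently, with (X1, X2, X3) uniformly distributed on (GF(2)^k)³, Z1 := φ1(X1, φ31(X3)), Z2 := φ2(X2, φ32(X3)), and F⊕ := f⊕ applied componentwise, one has H(Z1 | X3) ≥ k, H(Z2 | X3) ≥ k, and H((Z1, Z2) | F⊕, X3) ≥ k. -/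
open Classical

/-- The finite-field sum demand function `f⊕ : GF(2)³ → GF(2)`. -/
def fxor (x1 x2 x3 : ZMod 2) : ZMod 2 := x1 + x2 + x3


/-! Since `f⊕` is injective in `x1` and in `x2` when the other arguments are fixed, zero error
forces `φ1(·, φ31 a3)` and `φ2(·, φ32 a3)` to be injective: two inputs with the same codeword
would feed the decoder the same pair but demand different outputs.
For the uniform distribution, `H(W | V) ≥ k` as soon as every fibre of `(W, V)` is at most a
`2⁻ᵏ` fraction of the fibre of `V` containing it. Given `X3`, `Z1` determines `X1`, which leaves
`2ᵏ` of the `4ᵏ` points of a fibre of `X3`; given `F⊕` and `X3`, the pair `(Z1, Z2)` determines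
the whole sample point, while a fibre of `(F⊕, X3)` has `2ᵏ` points. -/

open Finset

namespace ZECode

variable {A B Z : Type*} {k : ℕ} {f : A → A → A → B} (c : ZECode A B Z k f)

theorem phi1_injective (hf : ∀ x2 x3, Function.Injective (f · x2 x3)) (a3 : Fin k → A) :
    Function.Injective fun x1 => c.phi1 x1 (c.phi31 a3) := by
  intro x y h
  have hfk := (c.zero_error x x a3).symm.trans
    ((congrArg (c.psi · (c.phi2 x (c.phi32 a3))) h).trans (c.zero_error y x a3))
  funext i
  exact hf _ _ (congrFun hfk i)

theorem phi2_injective (hf : ∀ x1 x3, Function.Injective (f x1 · x3)) (a3 : Fin k → A) :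
    Function.Injective fun x2 => c.phi2 x2 (c.phi32 a3) := by
  intro x y h
  have hfk := (c.zero_error x x a3).symm.trans
    ((congrArg (c.psi (c.phi1 x (c.phi31 a3)) ·) h).trans (c.zero_error x y a3))
  funext i
  exact hf _ _ (congrFun hfk i)

theorem encode_injective (hf1 : ∀ x2 x3, Function.Injective (f · x2 x3))
    (hf2 : ∀ x1 x3, Function.Injective (f x1 · x3)) (a3 : Fin k → A) :
    Function.Injective fun p : (Fin k → A) × (Fin k → A) =>
      (c.phi1 p.1 (c.phi31 a3), c.phi2 p.2 (c.phi32 a3)) :=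
  (c.phi1_injective hf1 a3).prodMap (c.phi2_injective hf2 a3)

end ZECode

lemma fxor_injective_left (x2 x3 : ZMod 2) : Function.Injective (fxor · x2 x3) :=
  fun _ _ h => by simpa [fxor] using h

lemma fxor_injective_mid (x1 x3 : ZMod 2) : Function.Injective (fxor x1 · x3) :=
  fun _ _ h => by simpa [fxor] using h

section Entropy

variable {Ω S T : Type*} [Fintype Ω] (W : Ω → S) (V : Ω → T)

lemma sum_sum_card_filter_eq_card :
    ∑ v ∈ univ.image V, ∑ s ∈ univ.image W, #{ω | W ω = s ∧ V ω = v} = Fintype.card Ω := by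
  rw [← card_univ, card_eq_sum_card_fiberwise fun ω _ => mem_image_of_mem V (mem_univ ω)]
  refine sum_congr rfl fun v _ => ?_
  rw [card_eq_sum_card_fiberwise fun ω _ => mem_image_of_mem W (mem_univ ω)]
  simp only [filter_filter, and_comm]

lemma le_logb_div_of_pow_mul_le {k n m : ℕ} (hn : 0 < n) (h : 2 ^ k * n ≤ m) :
    (k : ℝ) ≤ Real.logb 2 (m / n) := by
  have h2k : (2 : ℝ) ^ k ≤ m / n := by
    rw [le_div_iff₀ (by exact_mod_cast hn)]
    exact_mod_cast h
  calc (k : ℝ) = Real.logb 2 (2 ^ k) := by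
        rw [Real.logb_pow, Real.logb_self_eq_one one_lt_two, mul_one]
    _ ≤ Real.logb 2 (m / n) := Real.logb_le_logb_of_le (by norm_num) (by positivity) h2k

lemma le_uCondH_of_pow_mul_card_le [Nonempty Ω] {k : ℕ}
    (h : ∀ ω, 2 ^ k * #{ω' | W ω' = W ω ∧ V ω' = V ω} ≤ #{ω' | V ω' = V ω}) :
    (k : ℝ) ≤ uCondH W V := by
  have hN : (0 : ℝ) < Fintype.card Ω := by exact_mod_cast Fintype.card_pos
  have hmass : ∑ v ∈ univ.image V, ∑ s ∈ univ.image W,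
      (#{ω | W ω = s ∧ V ω = v} : ℝ) / Fintype.card Ω = 1 := by
    simp only [← sum_div]
    rw [div_eq_one_iff_eq hN.ne']
    exact_mod_cast sum_sum_card_filter_eq_card W V
  calc (k : ℝ) = ∑ v ∈ univ.image V, ∑ s ∈ univ.image W,
        k * ((#{ω | W ω = s ∧ V ω = v} : ℝ) / Fintype.card Ω) := by
        simp only [← mul_sum, hmass, mul_one]
    _ ≤ uCondH W V := by
      refine sum_le_sum fun v _ => sum_le_sum fun s _ => ?_
      rcases (#{ω | W ω = s ∧ V ω = v}).eq_zero_or_pos with h0 | hpos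
      · simp [h0]
      obtain ⟨ω₀, hω₀⟩ := card_pos.mp hpos
      obtain ⟨rfl, rfl⟩ := (mem_filter.mp hω₀).2
      rw [mul_comm]
      exact mul_le_mul_of_nonneg_left (le_logb_div_of_pow_mul_le hpos (h ω₀)) (by positivity)

lemma le_uCondH_of_determines [Nonempty Ω] {P : Type*} {k : ℕ} (Q : Ω → P)
    (hQ : ∀ ω ω', W ω' = W ω → V ω' = V ω → Q ω' = Q ω)
    (h : ∀ ω, 2 ^ k * #{ω' | Q ω' = Q ω ∧ V ω' = V ω} ≤ #{ω' | V ω' = V ω}) :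
    (k : ℝ) ≤ uCondH W V :=
  le_uCondH_of_pow_mul_card_le W V fun ω =>
    (Nat.mul_le_mul_left _ (card_le_card (monotone_filter_right _
      fun ω' _ hω' => ⟨hQ ω ω' hω'.1 hω'.2, hω'.2⟩))).trans (h ω)

lemma le_uCondH_of_injective [Nonempty Ω] {k : ℕ} (hWV : Function.Injective fun ω => (W ω, V ω))
    (h : ∀ ω, 2 ^ k ≤ #{ω' | V ω' = V ω}) :
    (k : ℝ) ≤ uCondH W V := by
  refine le_uCondH_of_pow_mul_card_le W V fun ω => ?_
  have hfiber : #{ω' | W ω' = W ω ∧ V ω' = V ω} ≤ 1 := by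
    refine card_le_one.mpr fun a ha b hb => hWV ?_
    obtain ⟨haW, haV⟩ := (mem_filter.mp ha).2
    obtain ⟨hbW, hbV⟩ := (mem_filter.mp hb).2
    simp only [haW, haV, hbW, hbV]
  calc 2 ^ k * #{ω' | W ω' = W ω ∧ V ω' = V ω} ≤ 2 ^ k * 1 := Nat.mul_le_mul_left _ hfiber
    _ = 2 ^ k := mul_one _
    _ ≤ #{ω' | V ω' = V ω} := h ω

end Entropy

section Counting

variable {α : Type*} [Fintype α]

lemma card_filter_snd_snd_eq (z : α) :
    #{ω : α × α × α | ω.2.2 = z} = Fintype.card α * Fintype.card α := by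
  rw [← Fintype.card_prod, ← card_univ]
  exact card_nbij' (fun ω => (ω.1, ω.2.1)) (fun p => (p.1, p.2, z)) (by simp) (by simp)
    (fun ω hω => by simp_all [Prod.ext_iff]) (fun _ _ => rfl)

lemma card_filter_fst_eq_and_snd_snd_eq (x z : α) :
    #{ω : α × α × α | ω.1 = x ∧ ω.2.2 = z} = Fintype.card α := by
  rw [← card_univ]
  exact card_nbij' (fun ω => ω.2.1) (fun y => (x, y, z)) (by simp) (by simp)
    (fun ω hω => by simp_all [Prod.ext_iff]) (fun _ _ => rfl)

lemma card_filter_snd_fst_eq_and_snd_snd_eq (y z : α) :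
    #{ω : α × α × α | ω.2.1 = y ∧ ω.2.2 = z} = Fintype.card α := by
  rw [← card_univ]
  exact card_nbij' (fun ω => ω.1) (fun x => (x, y, z)) (by simp) (by simp)
    (fun ω hω => by simp_all [Prod.ext_iff]) (fun _ _ => rfl)

lemma card_filter_add_eq_and_snd_snd_eq [AddCommGroup α] (s z : α) :
    #{ω : α × α × α | ω.1 + ω.2.1 + ω.2.2 = s ∧ ω.2.2 = z} = Fintype.card α := by
  rw [← card_univ]
  refine card_nbij' (fun ω => ω.1) (fun x => (x, s - x - z, z)) (by simp)
    (fun x _ => mem_coe.mpr (mem_filter.mpr ⟨mem_univ _, by dsimp only; abel, rfl⟩))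
    (fun ω hω => ?_) (fun _ _ => rfl)
  obtain ⟨rfl, rfl⟩ := (mem_filter.mp hω).2
  exact Prod.ext rfl (Prod.ext (by dsimp only; abel) rfl)

end Counting

lemma fun_fxor_eq_add {k : ℕ} (x1 x2 x3 : Fin k → ZMod 2) :
    (fun i => fxor (x1 i) (x2 i) (x3 i)) = x1 + x2 + x3 := rfl

theorem stmt_18_general {Z : Type*}
    {k : ℕ} (c : ZECode (ZMod 2) (ZMod 2) Z k fxor) :
    (∀ a3 : Fin k → ZMod 2,
      Function.Injective (fun p : (Fin k → ZMod 2) × (Fin k → ZMod 2) =>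
        (c.phi1 p.1 (c.phi31 a3), c.phi2 p.2 (c.phi32 a3)))) ∧
    uCondH
        (fun ω : (Fin k → ZMod 2) × (Fin k → ZMod 2) × (Fin k → ZMod 2) =>
          c.phi1 ω.1 (c.phi31 ω.2.2))
        (fun ω : (Fin k → ZMod 2) × (Fin k → ZMod 2) × (Fin k → ZMod 2) => ω.2.2) ≥ k ∧
    uCondH
        (fun ω : (Fin k → ZMod 2) × (Fin k → ZMod 2) × (Fin k → ZMod 2) =>
          c.phi2 ω.2.1 (c.phi32 ω.2.2))
        (fun ω : (Fin k → ZMod 2) × (Fin k → ZMod 2) × (Fin k → ZMod 2) => ω.2.2) ≥ k ∧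
    uCondH
        (fun ω : (Fin k → ZMod 2) × (Fin k → ZMod 2) × (Fin k → ZMod 2) =>
          (c.phi1 ω.1 (c.phi31 ω.2.2), c.phi2 ω.2.1 (c.phi32 ω.2.2)))
        (fun ω : (Fin k → ZMod 2) × (Fin k → ZMod 2) × (Fin k → ZMod 2) =>
          ((fun i => fxor (ω.1 i) (ω.2.1 i) (ω.2.2 i)), ω.2.2)) ≥ k := by
  have hcard : Fintype.card (Fin k → ZMod 2) = 2 ^ k := by simp
  have hinj := c.encode_injective fxor_injective_left fxor_injective_mid
  refine ⟨hinj, ?_, ?_, ?_⟩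
  · refine le_uCondH_of_determines _ _ Prod.fst (fun ω ω' hW hV => ?_) fun ω => ?_
    · rw [hV] at hW
      exact c.phi1_injective fxor_injective_left ω.2.2 hW
    · rw [card_filter_fst_eq_and_snd_snd_eq, card_filter_snd_snd_eq, hcard]
  · refine le_uCondH_of_determines _ _ (·.2.1) (fun ω ω' hW hV => ?_) fun ω => ?_
    · rw [hV] at hW
      exact c.phi2_injective fxor_injective_mid ω.2.2 hW
    · rw [card_filter_snd_fst_eq_and_snd_snd_eq, card_filter_snd_snd_eq, hcard]
  · refine le_uCondH_of_injective _ _ (fun ω ω' h => ?_) fun ω => ?_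
    · simp only [Prod.mk.injEq] at h
      obtain ⟨⟨h1, h2⟩, -, h3⟩ := h
      rw [h3] at h1 h2
      obtain ⟨h1, h2⟩ := Prod.mk.inj (hinj ω'.2.2 (Prod.ext h1 h2))
      exact Prod.ext h1 (Prod.ext h2 h3)
    · rw [← hcard, ← card_filter_add_eq_and_snd_snd_eq (ω.1 + ω.2.1 + ω.2.2) ω.2.2]
      simp only [fun_fxor_eq_add, Prod.mk.injEq]
      -- the two filters differ only in their `Decidable` instances
      exact le_of_eq (by congr)

/-- For any zero-error code for the `GF(2)`-sum `f⊕`, the joint encoder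
`(x1, x2) ↦ (φ1(x1, φ31(a3)), φ2(x2, φ32(a3)))` is injective for every `a3`; consequently
`H(Z1 | X3) ≥ k`, `H(Z2 | X3) ≥ k`, and `H((Z1, Z2) | (F⊕, X3)) ≥ k`. -/
theorem stmt_18 {Z : Type*} [Fintype Z] (hZ : 1 < Fintype.card Z)
    {k : ℕ} (hk : 1 ≤ k) (c : ZECode (ZMod 2) (ZMod 2) Z k fxor) :
    (∀ a3 : Fin k → ZMod 2,
      Function.Injective (fun p : (Fin k → ZMod 2) × (Fin k → ZMod 2) =>
        (c.phi1 p.1 (c.phi31 a3), c.phi2 p.2 (c.phi32 a3)))) ∧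
    uCondH
        (fun ω : (Fin k → ZMod 2) × (Fin k → ZMod 2) × (Fin k → ZMod 2) =>
          c.phi1 ω.1 (c.phi31 ω.2.2))
        (fun ω : (Fin k → ZMod 2) × (Fin k → ZMod 2) × (Fin k → ZMod 2) => ω.2.2) ≥ k ∧
    uCondH
        (fun ω : (Fin k → ZMod 2) × (Fin k → ZMod 2) × (Fin k → ZMod 2) =>
          c.phi2 ω.2.1 (c.phi32 ω.2.2))
        (fun ω : (Fin k → ZMod 2) × (Fin k → ZMod 2) × (Fin k → ZMod 2) => ω.2.2) ≥ k ∧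
    uCondH
        (fun ω : (Fin k → ZMod 2) × (Fin k → ZMod 2) × (Fin k → ZMod 2) =>
          (c.phi1 ω.1 (c.phi31 ω.2.2), c.phi2 ω.2.1 (c.phi32 ω.2.2)))
        (fun ω : (Fin k → ZMod 2) × (Fin k → ZMod 2) × (Fin k → ZMod 2) =>
          ((fun i => fxor (ω.1 i) (ω.2.1 i) (ω.2.2 i)), ω.2.2)) ≥ k :=
  stmt_18_general c
end

section
/- Let f⊕ : GF(2)³ → GF(2) be the finite-field sum f⊕(x1, x2, x3) = x1 + x2 + x3 over GF(2). For every block length k ≥ 1 and every integer c with 0 ≤ c ≤ k, there exists a zero-error code for f⊕ with block length k over the alphabet Z = {0,1} such that for all x1, x2, x3 ∈ GF(2)^k: length(φ31(x3)) = c, length(φ32(x3)) = k − c, length(φ1(x1, φ31(x3))) = k, and length(φ2(x2, φ32(x3))) = k. -/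
open Classical

def encZ (x : ZMod 2) : Fin 2 := ⟨x.val, x.val_lt⟩
def decZ (z : Fin 2) : ZMod 2 := (z.val : ZMod 2)

lemma decZ_encZ (x : ZMod 2) : decZ (encZ x) = x := by
  fin_cases x <;> rfl

/-- For every `k ≥ 1` and `0 ≤ c ≤ k`, there is a zero-error code for the
`GF(2)`-sum over the binary alphabet with `|φ31(x3)| = c`, `|φ32(x3)| = k − c`, and
`|φ1(x1, φ31(x3))| = |φ2(x2, φ32(x3))| = k` for all messages. -/
theorem stmt_19 {k : ℕ} (hk : 1 ≤ k) (c : ℕ) (hc : c ≤ k) :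
    ∃ code : ZECode (ZMod 2) (ZMod 2) (Fin 2) k fxor,
      ∀ x1 x2 x3 : Fin k → ZMod 2,
        (code.phi31 x3).length = c ∧
        (code.phi32 x3).length = k - c ∧
        (code.phi1 x1 (code.phi31 x3)).length = k ∧
        (code.phi2 x2 (code.phi32 x3)).length = k := by
  refine ⟨⟨
    fun x3 => List.ofFn fun j : Fin c => encZ (x3 ⟨j, lt_of_lt_of_le j.2 hc⟩),
    fun x3 => List.ofFn fun j : Fin (k - c) => encZ (x3 ⟨c + j, by omega⟩),
    fun x1 l => List.ofFn fun i : Fin k =>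
      encZ (x1 i + if i.val < c then decZ (l.getD i.val 0) else 0),
    fun x2 l => List.ofFn fun i : Fin k =>
      encZ (x2 i + if c ≤ i.val then decZ (l.getD (i.val - c) 0) else 0),
    fun l1 l2 => fun i => decZ (l1.getD i.val 0) + decZ (l2.getD i.val 0),
    ?_⟩, ?_⟩
  · intro x1 x2 x3
    funext i
    have hi : i.val < k := i.2
    rw [List.getD_eq_getElem _ _ (by simp [hi]), List.getD_eq_getElem _ _ (by simp [hi])]
    simp only [List.getElem_ofFn, decZ_encZ]
    by_cases h : i.val < c
    · rw [if_pos h, if_neg (by omega), List.getD_eq_getElem _ _ (by simp [h]),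
        List.getElem_ofFn, decZ_encZ]
      have hx : x3 ⟨(⟨i.val, h⟩ : Fin c).val,
          lt_of_lt_of_le (⟨i.val, h⟩ : Fin c).2 hc⟩ = x3 i := by
        congr 1
      rw [hx, fxor]; ring
    · rw [if_neg h, if_pos (by omega),
        List.getD_eq_getElem _ _ (by simp; omega), List.getElem_ofFn, decZ_encZ]
      have hx : x3 ⟨c + (i.val - c), by omega⟩ = x3 i := by
        congr 1; exact Fin.ext (by simp; omega)
      rw [hx, fxor]; ring
  · intro x1 x2 x3
    refine ⟨by simp, by simp, by simp, by simp⟩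
end
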